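/- arXiv:1107.1356 — 11 statements merged into one kernel-verified Lean document; each statement's English description precedes it below -/
import Mathlib

section
/- Let Y be a compact Hausdorff topological group with Haar probability measure μ, let Λ ≤ Y be a countable subgroup, and let a countable group Γ act on Y by continuous group automorphisms (α_g)_{g∈Γ} with α_g(Λ) = Λ for all g. Assume that for every g ∈ Γ with g ≠ e, the closed subgroup {y ∈ Y : α_g(y) = y} has infinite index in Y. Then the action of the semidirect product Λ ⋊ Γ on Y given by (λ, g)·y = λ·α_g(y) is essentially free: for every pair (λ, g) ∈ Λ × Γ with (λ, g) ≠ (e, e), the set {y ∈ Y : λ·α_g(y) = y} is μ-null. -/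
open MeasureTheory
open scoped Pointwise

/-
The fixed points of `α_g` form a closed subgroup `H`, and the solution set of `λ · α_g(y) = y`
is either empty or a left coset `y₀ H`. A left-invariant finite measure gives all cosets of `H`
the same mass, so infinitely many disjoint ones force `μ H = 0`.
-/

/-- The subgroup of fixed points of a group automorphism. -/
def fixedSubgroup {Y : Type*} [Group Y] (φ : Y ≃* Y) : Subgroup Y where
  carrier := {y | φ y = y}
  one_mem' := map_one φ
  mul_mem' := by
    intro a b ha hb
    simp only [Set.mem_setOf_eq] at *
    rw [map_mul, ha, hb]
  inv_mem' := by
    intro a ha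
    simp only [Set.mem_setOf_eq] at *
    rw [map_inv, ha]

theorem Subgroup.measure_eq_zero_of_infinite_quotient {G : Type*} [Group G] [MeasurableSpace G]
    [MeasurableMul G] (H : Subgroup G) [Infinite (G ⧸ H)] (hH : MeasurableSet (H : Set G))
    (μ : Measure G) [μ.IsMulLeftInvariant] [IsFiniteMeasure μ] : μ H = 0 := by
  obtain ⟨s, hs, -⟩ := H.exists_isComplement_left 1
  have : Infinite s := by
    rw [← not_finite_iff_infinite, hs.finite_left_iff, Subgroup.finiteIndex_iff_finite_quotient,
      not_finite_iff_infinite]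
    infer_instance
  -- `s` may be uncountable, and `measure_iUnion` needs a countable family of cosets.
  let e := Infinite.natEmbedding ↥s
  by_contra hμH
  have hcosets : μ (⋃ n, (e n).val • (H : Set G)) = ⊤ := by
    rw [measure_iUnion (fun m n hmn ↦ hs.pairwiseDisjoint_smul (e m).2 (e n).2
      (Subtype.val_injective.ne (e.injective.ne hmn))) fun _ ↦ hH.const_smul _]
    simpa [measure_smul] using ENNReal.tsum_const_eq_top_of_ne_zero (α := ℕ) hμH
  exact measure_ne_top μ _ hcosets

section FixedSubgroup

variable {Y : Type*} [Group Y]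

theorem isClosed_fixedSubgroup [TopologicalSpace Y] [T2Space Y] {φ : Y ≃* Y}
    (hφ : Continuous φ) : IsClosed (fixedSubgroup φ : Set Y) :=
  isClosed_eq hφ continuous_id

theorem setOf_mul_apply_eq_self_eq_smul_fixedSubgroup (φ : Y ≃* Y) {a y₀ : Y}
    (hy₀ : a * φ y₀ = y₀) : {y | a * φ y = y} = y₀ • (fixedSubgroup φ : Set Y) := by
  obtain rfl : a = y₀ * (φ y₀)⁻¹ := eq_mul_inv_of_mul_eq hy₀
  ext y
  rw [Set.mem_ofPred_eq, mem_leftCoset_iff]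
  change _ ↔ φ (y₀⁻¹ * y) = y₀⁻¹ * y
  rw [map_mul, map_inv, mul_assoc, eq_inv_mul_iff_mul_eq]

end FixedSubgroup

theorem translation_automorphism_action_essentially_free_general
    {Y : Type*} [Group Y] [TopologicalSpace Y] [IsTopologicalGroup Y]
    [T2Space Y] [MeasurableSpace Y] [BorelSpace Y]
    (μ : Measure Y) [μ.IsHaarMeasure] [IsProbabilityMeasure μ]
    {Γ : Type*} [Group Γ]
    (α : Γ →* MulAut Y) (hcont : ∀ g : Γ, Continuous (α g))
    (hfix : ∀ g : Γ, g ≠ 1 → Infinite (Y ⧸ fixedSubgroup (α g)))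
    (lam : Y) (g : Γ) (hne : ¬(lam = 1 ∧ g = 1)) :
    μ {y : Y | lam * (α g) y = y} = 0 := by
  rcases eq_or_ne g 1 with rfl | hg
  · have hlam : lam ≠ 1 := fun h ↦ hne ⟨h, rfl⟩
    simp [hlam]
  rcases Set.eq_empty_or_nonempty {y : Y | lam * (α g) y = y} with hempty | ⟨y₀, hy₀⟩
  · rw [hempty, measure_empty]
  have := hfix g hg
  rw [setOf_mul_apply_eq_self_eq_smul_fixedSubgroup _ hy₀, measure_smul]
  exact (fixedSubgroup (α g)).measure_eq_zero_of_infinite_quotient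
    (isClosed_fixedSubgroup (hcont g)).measurableSet μ

/-- Let `Y` be a compact Hausdorff topological group with Haar probability
measure `μ`, `Λ ≤ Y` a countable subgroup, and let a countable group `Γ` act on `Y` by
continuous group automorphisms `α_g` with `α_g(Λ) = Λ`.  If for every `g ≠ e` the subgroup
of `α_g`-fixed points has infinite index in `Y`, then the action of `Λ ⋊ Γ` on `Y` given by
`(λ, g) · y = λ · α_g(y)` is essentially free: for every `(λ, g) ≠ (e, e)` the set
`{y | λ · α_g(y) = y}` is `μ`-null. -/
theorem translation_automorphism_action_essentially_free
    {Y : Type*} [Group Y] [TopologicalSpace Y] [IsTopologicalGroup Y]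
    [CompactSpace Y] [T2Space Y] [MeasurableSpace Y] [BorelSpace Y]
    (μ : Measure Y) [μ.IsHaarMeasure] [IsProbabilityMeasure μ]
    (Λ : Subgroup Y) (hΛcount : Countable Λ)
    {Γ : Type*} [Group Γ] [Countable Γ]
    (α : Γ →* MulAut Y) (hcont : ∀ g : Γ, Continuous (α g))
    (hΛinv : ∀ g : Γ, Subgroup.map (α g).toMonoidHom Λ = Λ)
    (hfix : ∀ g : Γ, g ≠ 1 → Infinite (Y ⧸ fixedSubgroup (α g)))
    (lam : Y) (hlam : lam ∈ Λ) (g : Γ) (hne : ¬(lam = 1 ∧ g = 1)) :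
    μ {y : Y | lam * (α g) y = y} = 0 :=
  translation_automorphism_action_essentially_free_general μ α hcont hfix lam g hne
end

section
/- Let 𝒢₁ ↷ (Z₁, μ₁) and 𝒢₂ ↷ (Z₂, μ₂) be free ergodic probability-measure-preserving actions of countable groups on standard probability spaces, and let Ψ : Z₁ → Z₂ be a stable orbit equivalence. If Λ ≤ 𝒢₁ is a subgroup such that Ψ(g·x) = Ψ(x) for all g ∈ Λ and almost every x ∈ Z₁, then Λ is a finite group. -/
open MeasureTheory

/-- `Ψ : Z₁ → Z₂` is a local isomorphism between the measure spaces `(Z₁, μ₁)` and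
`(Z₂, μ₂)`: `Z₁ can be partitioned, up to a null set, into countably many non-null
measurable pieces on each of which `Ψ` is an injective bimeasurable map onto a non-null
measurable subset of `Z₂`, pushing the restricted measure to a measure equivalent to the
restriction of `μ₂` to the image. -/
def IsLocalIso {Z₁ Z₂ : Type*} [MeasurableSpace Z₁] [MeasurableSpace Z₂]
    (μ₁ : Measure Z₁) (μ₂ : Measure Z₂) (Ψ : Z₁ → Z₂) : Prop :=
  Measurable Ψ ∧
  ∃ (ι : Type) (_ : Countable ι) (W : ι → Set Z₁),
    (∀ n, MeasurableSet (W n)) ∧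
    (∀ n m, n ≠ m → Disjoint (W n) (W m)) ∧
    μ₁ (⋃ n, W n)ᶜ = 0 ∧
    ∀ n, μ₁ (W n) ≠ 0 ∧
      Set.InjOn Ψ (W n) ∧
      MeasurableSet (Ψ '' W n) ∧
      μ₂ (Ψ '' W n) ≠ 0 ∧
      (∀ A : Set Z₁, A ⊆ W n → MeasurableSet A → MeasurableSet (Ψ '' A)) ∧
      (∀ B : Set Z₂, B ⊆ Ψ '' W n → MeasurableSet B →
        (μ₂ B = 0 ↔ μ₁ (Ψ ⁻¹' B ∩ W n) = 0))

/-- `Ψ : Z₁ → Z₂` is a stable orbit equivalence between the actions `G₁ ↷ (Z₁, μ₁)` and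
`G₂ ↷ (Z₂, μ₂)`: a local isomorphism such that for almost every pair `x, y ∈ Z₁` one has
`x ∈ G₁ · y` if and only if `Ψ(x) ∈ G₂ · Ψ(y)`. -/
def IsStableOrbitEquiv (G₁ G₂ : Type*) {Z₁ Z₂ : Type*} [Group G₁] [Group G₂]
    [MulAction G₁ Z₁] [MulAction G₂ Z₂] [MeasurableSpace Z₁] [MeasurableSpace Z₂]
    (μ₁ : Measure Z₁) (μ₂ : Measure Z₂) [SFinite μ₁] (Ψ : Z₁ → Z₂) : Prop :=
  IsLocalIso μ₁ μ₂ Ψ ∧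
  ∀ᵐ p ∂(μ₁.prod μ₁),
    ((∃ g : G₁, g • p.2 = p.1) ↔ (∃ g : G₂, g • Ψ p.2 = Ψ p.1))

/-!
A piece `W` of the local isomorphism on which `Ψ` is injective meets each of its translates
`g⁻¹ • W`, `1 ≠ g ∈ Λ`, only in a null set: there `Ψ (g • x) = Ψ x` forces `g • x = x`, which
freeness rules out almost surely. Hence the translates of `W` by the elements of `Λ` are almost
disjoint sets of the same positive measure, and a probability space holds only finitely many.
-/

theorem IsLocalIso.exists_injOn {Z₁ Z₂ : Type*} [MeasurableSpace Z₁] [MeasurableSpace Z₂]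
    {μ₁ : Measure Z₁} {μ₂ : Measure Z₂} [NeZero μ₁] {Ψ : Z₁ → Z₂}
    (hΨ : IsLocalIso μ₁ μ₂ Ψ) : ∃ W, MeasurableSet W ∧ μ₁ W ≠ 0 ∧ Set.InjOn Ψ W := by
  obtain ⟨-, ι, -, W, hWm, -, hWcompl, hW⟩ := hΨ
  cases isEmpty_or_nonempty ι with
  | inl hι =>
    rw [Set.iUnion_of_empty, Set.compl_empty, Measure.measure_univ_eq_zero] at hWcompl
    exact absurd hWcompl (NeZero.ne μ₁)
  | inr hι =>
    obtain ⟨n⟩ := hι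
    exact ⟨W n, hWm n, (hW n).1, (hW n).2.1⟩

theorem measure_preimage_inter_eq_zero_of_injOn {Z Y : Type*} [MeasurableSpace Z]
    {μ : Measure Z} {f : Z → Z} {Ψ : Z → Y} {W : Set Z} (hW : Set.InjOn Ψ W)
    (hΨf : ∀ᵐ x ∂μ, Ψ (f x) = Ψ x) (hfix : μ {x | f x = x} = 0) :
    μ (f ⁻¹' W ∩ W) = 0 := by
  refine measure_mono_null (fun x ⟨hfx, hx⟩ => ?_) (measure_union_null hΨf hfix)
  by_cases hΨx : Ψ (f x) = Ψ x
  · exact Or.inr (hW hfx hx hΨx)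
  · exact Or.inl hΨx

theorem Subgroup.finite_of_measure_smul_preimage_inter_eq_zero {G Z : Type*} [Group G]
    [MulAction G Z] [MeasurableSpace Z] {μ : Measure Z} [IsFiniteMeasure μ]
    (hmp : ∀ g : G, MeasurePreserving (g • ·) μ μ) (H : Subgroup G) {W : Set Z}
    (hWm : MeasurableSet W) (hW0 : μ W ≠ 0)
    (hH : ∀ g ∈ H, g ≠ 1 → μ ((g • ·) ⁻¹' W ∩ W) = 0) : Finite H := by
  set s : H → Set Z := fun g => ((g : G) • ·) ⁻¹' W
  have hsm (g : H) : MeasurableSet (s g) := (hmp g).measurable hWm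
  have hsμ (g : H) : μ (s g) = μ W := (hmp g).measure_preimage hWm.nullMeasurableSet
  have hdisj : Pairwise (Function.onFun (AEDisjoint μ) s) := by
    intro g h hgh
    have hne : (g : G) * (h : G)⁻¹ ≠ 1 := mul_inv_eq_one.not.mpr (Subtype.coe_ne_coe.mpr hgh)
    have hinter : s g ∩ s h =
        ((h : G) • ·) ⁻¹' ((((g : G) * (h : G)⁻¹) • ·) ⁻¹' W ∩ W) := by
      ext x
      simp only [s, Set.mem_inter_iff, Set.mem_preimage, smul_smul, inv_mul_cancel_right]
    change μ (s g ∩ s h) = 0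
    rw [hinter, (hmp h).measure_preimage (((hmp _).measurable hWm).inter hWm).nullMeasurableSet]
    exact hH _ (mul_mem g.2 (inv_mem h.2)) hne
  have hfin := Measure.finite_const_le_meas_of_disjoint_iUnion₀ μ (pos_iff_ne_zero.mpr hW0)
    (fun g => (hsm g).nullMeasurableSet) hdisj (measure_ne_top μ _)
  simpa only [hsμ, le_refl, Set.ofPred_true, Set.finite_univ_iff] using hfin

theorem finite_of_stableOrbitEquiv_invariant_general
    {G₁ G₂ Z₁ Z₂ : Type*} [Group G₁] [Group G₂]
    [MeasurableSpace Z₁] [MeasurableSpace Z₂]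
    [MulAction G₁ Z₁] [MulAction G₂ Z₂]
    (μ₁ : Measure Z₁) (μ₂ : Measure Z₂)
    [IsProbabilityMeasure μ₁]
    (hmp₁ : ∀ g : G₁, MeasurePreserving (fun x => g • x) μ₁ μ₁)
    (hfree₁ : ∀ g : G₁, g ≠ 1 → μ₁ {x | g • x = x} = 0)
    (Ψ : Z₁ → Z₂) (hΨ : IsStableOrbitEquiv G₁ G₂ μ₁ μ₂ Ψ)
    (Λ : Subgroup G₁) (hΛ : ∀ g ∈ Λ, ∀ᵐ x ∂μ₁, Ψ (g • x) = Ψ x) :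
    Finite Λ := by
  obtain ⟨W, hWm, hW0, hWinj⟩ := hΨ.1.exists_injOn
  exact Λ.finite_of_measure_smul_preimage_inter_eq_zero hmp₁ hWm hW0 fun g hg hg1 =>
    measure_preimage_inter_eq_zero_of_injOn hWinj (hΛ g hg) (hfree₁ g hg1)

/-- Let `G₁ ↷ (Z₁, μ₁)` and `G₂ ↷ (Z₂, μ₂)` be free ergodic p.m.p.
actions of countable groups on standard probability spaces and let `Ψ : Z₁ → Z₂` be a
stable orbit equivalence.  If `Λ ≤ G₁` is a subgroup such that `Ψ(g · x) = Ψ(x)` for all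
`g ∈ Λ` and almost every `x`, then `Λ` is finite. -/
theorem finite_of_stableOrbitEquiv_invariant
    {G₁ G₂ Z₁ Z₂ : Type*} [Group G₁] [Countable G₁] [Group G₂] [Countable G₂]
    [MeasurableSpace Z₁] [StandardBorelSpace Z₁]
    [MeasurableSpace Z₂] [StandardBorelSpace Z₂]
    [MulAction G₁ Z₁] [MulAction G₂ Z₂]
    (μ₁ : Measure Z₁) (μ₂ : Measure Z₂)
    [IsProbabilityMeasure μ₁] [IsProbabilityMeasure μ₂]
    (hmp₁ : ∀ g : G₁, MeasurePreserving (fun x => g • x) μ₁ μ₁)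
    (hmp₂ : ∀ g : G₂, MeasurePreserving (fun x => g • x) μ₂ μ₂)
    (hfree₁ : ∀ g : G₁, g ≠ 1 → μ₁ {x | g • x = x} = 0)
    (hfree₂ : ∀ g : G₂, g ≠ 1 → μ₂ {x | g • x = x} = 0)
    (herg₁ : ∀ S : Set Z₁, MeasurableSet S → (∀ g : G₁, (fun x => g • x) ⁻¹' S = S) →
      μ₁ S = 0 ∨ μ₁ Sᶜ = 0)
    (herg₂ : ∀ S : Set Z₂, MeasurableSet S → (∀ g : G₂, (fun x => g • x) ⁻¹' S = S) →
      μ₂ S = 0 ∨ μ₂ Sᶜ = 0)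
    (Ψ : Z₁ → Z₂) (hΨ : IsStableOrbitEquiv G₁ G₂ μ₁ μ₂ Ψ)
    (Λ : Subgroup G₁) (hΛ : ∀ g ∈ Λ, ∀ᵐ x ∂μ₁, Ψ (g • x) = Ψ x) :
    Finite Λ :=
  finite_of_stableOrbitEquiv_invariant_general μ₁ μ₂ hmp₁ hfree₁ Ψ hΨ Λ hΛ
end

section
/- Let K be a compact Hausdorff abelian topological group with a countable dense subgroup Λ, and let K₁, K₂ ≤ K be closed subgroups. If K₂ ⊆ ΛK₁ and the quotient group ΛK₁/K₂ is countable, then K₁ and K₂ are commensurate. -/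
/-!
A closed subgroup `H` of a compact group with only countably many cosets is open, hence of finite
index: the cosets are countably many closed sets covering a Baire space, so one of them, and thus
`H` itself, has nonempty interior. Applied inside the compact groups `K₂` and `K₁`, this reduces
the theorem to counting cosets: `K₂ ⊆ ΛK₁` is covered by the countably many cosets `λK₁`, and
`K₁ ⊆ ΛK₁` by the countably many cosets of `K₂` in `ΛK₁`.
-/

open Pointwise

/-- In a commutative group `K`, the subgroup `AB = {ab : a ∈ A, b ∈ B}`. -/
def prodSubgroup {K : Type*} [CommGroup K] (A B : Subgroup K) : Subgroup K where
  carrier := {x | ∃ a ∈ A, ∃ b ∈ B, x = a * b}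
  one_mem' := ⟨1, A.one_mem, 1, B.one_mem, (one_mul 1).symm⟩
  mul_mem' := by
    rintro x y ⟨a, ha, b, hb, rfl⟩ ⟨c, hc, d, hd, rfl⟩
    exact ⟨a * c, A.mul_mem ha hc, b * d, B.mul_mem hb hd, mul_mul_mul_comm a b c d⟩
  inv_mem' := by
    rintro x ⟨a, ha, b, hb, rfl⟩
    exact ⟨a⁻¹, A.inv_mem ha, b⁻¹, B.inv_mem hb, mul_inv a b⟩

namespace Subgroup

variable {G : Type*} [Group G] [TopologicalSpace G] [IsTopologicalGroup G]

theorem isOpen_of_isClosed_of_countable_quotient [BaireSpace G] (H : Subgroup G)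
    (hH : IsClosed (H : Set G)) [Countable (G ⧸ H)] : IsOpen (H : Set G) := by
  have hclosed : ∀ q : G ⧸ H, IsClosed (q.out • (H : Set G)) := fun q => hH.smul q.out
  have hcover : ⋃ q : G ⧸ H, q.out • (H : Set G) = Set.univ := by
    refine Set.eq_univ_of_forall fun x => Set.mem_iUnion.mpr ⟨(x : G ⧸ H), ?_⟩
    exact mem_leftCoset_iff _ |>.mpr (QuotientGroup.eq.mp (QuotientGroup.out_eq' (x : G ⧸ H)))
  obtain ⟨q, y, hy⟩ := nonempty_interior_of_iUnion_of_closed hclosed hcover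
  rw [interior_smul] at hy
  obtain ⟨z, hz, -⟩ := hy
  exact H.isOpen_of_mem_nhds (mem_interior_iff_mem_nhds.mp hz)

theorem finite_quotient_of_isClosed_of_countable_quotient [CompactSpace G] (H : Subgroup G)
    (hH : IsClosed (H : Set G)) [Countable (G ⧸ H)] : Finite (G ⧸ H) :=
  H.quotient_finite_of_isOpen (H.isOpen_of_isClosed_of_countable_quotient hH)

theorem relIndex_ne_zero_of_countable_quotient [CompactSpace G] {H C : Subgroup G}
    (hH : IsClosed (H : Set G)) (hC : IsClosed (C : Set G)) [Countable (C ⧸ H.subgroupOf C)] :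
    H.relIndex C ≠ 0 := by
  have : CompactSpace C := isCompact_iff_compactSpace.mp hC.isCompact
  have := (H.subgroupOf C).finite_quotient_of_isClosed_of_countable_quotient
    (hH.preimage continuous_subtype_val)
  exact index_ne_zero_of_finite

end Subgroup

section prodSubgroup

variable {K : Type*} [CommGroup K]

theorem le_prodSubgroup_right (A B : Subgroup K) : B ≤ prodSubgroup A B :=
  fun b hb => ⟨1, A.one_mem, b, hb, (one_mul b).symm⟩

theorem countable_quotient_prodSubgroup (A B : Subgroup K) [Countable A] :
    Countable (prodSubgroup A B ⧸ B.subgroupOf (prodSubgroup A B)) := by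
  refine Function.Surjective.countable
    (f := fun a : A => (⟨a, a, a.2, 1, B.one_mem, (mul_one _).symm⟩ : prodSubgroup A B)) ?_
  rintro ⟨p⟩
  obtain ⟨a, ha, b, hb, hp⟩ := p.2
  refine ⟨⟨a, ha⟩, QuotientGroup.eq.mpr ?_⟩
  simpa [Subgroup.mem_subgroupOf, hp] using hb

end prodSubgroup

theorem commensurate_of_subset_prod_of_countable_quotient_general
    {K : Type*} [CommGroup K] [TopologicalSpace K] [IsTopologicalGroup K]
    [CompactSpace K]
    (Λ : Subgroup K) (hΛcount : Countable Λ)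
    (K₁ K₂ : Subgroup K) (h₁ : IsClosed (K₁ : Set K)) (h₂ : IsClosed (K₂ : Set K))
    (hsub : (K₂ : Set K) ⊆ (prodSubgroup Λ K₁ : Set K))
    (hcount : Countable
      ((prodSubgroup Λ K₁ : Subgroup K) ⧸ K₂.subgroupOf (prodSubgroup Λ K₁))) :
    Subgroup.Commensurable K₁ K₂ := by
  have := countable_quotient_prodSubgroup Λ K₁
  have : Countable (K₂ ⧸ K₁.subgroupOf K₂) :=
    (Subgroup.quotientSubgroupOfEmbeddingOfLE K₁ hsub).countable
  have : Countable (K₁ ⧸ K₂.subgroupOf K₁) :=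
    (Subgroup.quotientSubgroupOfEmbeddingOfLE K₂ (le_prodSubgroup_right Λ K₁)).countable
  exact ⟨Subgroup.relIndex_ne_zero_of_countable_quotient h₁ h₂,
    Subgroup.relIndex_ne_zero_of_countable_quotient h₂ h₁⟩

/-- Let `K` be a compact Hausdorff abelian topological group with a countable
dense subgroup `Λ`, and let `K₁, K₂ ≤ K` be closed subgroups.  If `K₂ ⊆ ΛK₁` and the quotient
`ΛK₁/K₂` is countable, then `K₁` and `K₂` are commensurate. -/
theorem commensurate_of_subset_prod_of_countable_quotient
    {K : Type*} [CommGroup K] [TopologicalSpace K] [IsTopologicalGroup K]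
    [CompactSpace K] [T2Space K]
    (Λ : Subgroup K) (hΛcount : Countable Λ) (hΛdense : Dense (Λ : Set K))
    (K₁ K₂ : Subgroup K) (h₁ : IsClosed (K₁ : Set K)) (h₂ : IsClosed (K₂ : Set K))
    (hsub : (K₂ : Set K) ⊆ (prodSubgroup Λ K₁ : Set K))
    (hcount : Countable
      ((prodSubgroup Λ K₁ : Subgroup K) ⧸ K₂.subgroupOf (prodSubgroup Λ K₁))) :
    Subgroup.Commensurable K₁ K₂ :=
  commensurate_of_subset_prod_of_countable_quotient_general Λ hΛcount K₁ K₂ h₁ h₂ hsub hcount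
end

section
/- Let K be a compact Hausdorff abelian topological group with a countable dense subgroup Λ, and let K₁, K₂ ≤ K be closed subgroups. Assume that K₁ and K₂ are commensurate and that K₂ ⊆ ΛK₁. If Λ ∩ K₁ is dense in K₁, then Λ ∩ K₂ is dense in K₂. -/
/-!
Write `x ∈ K₂` as `x = λk` with `λ ∈ Λ`, `k ∈ K₁`. Approximating `k` by points of `Λ ∩ K₁`
shows that `x` lies in the closure of `Λ ∩ K₂K₁`. Since `K₂` is closed of finite index in `K₂K₁`,
it is open in `K₂K₁`, so the approximating points close to `x` already lie in `Λ ∩ K₂`.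
-/

open Topology

theorem mem_closure_inter_of_mem_nhdsWithin {X : Type*} [TopologicalSpace X] {s u : Set X}
    {x : X} (hx : x ∈ closure s) (hu : u ∈ 𝓝[s] x) : x ∈ closure (s ∩ u) := by
  rw [mem_closure_iff_nhdsWithin_neBot] at hx ⊢
  rwa [nhdsWithin_inter_of_mem' hu]

theorem Subgroup.mem_nhdsWithin_of_isClosed_of_relIndex_ne_zero {G : Type*} [Group G]
    [TopologicalSpace G] [IsTopologicalGroup G] {H L : Subgroup G} (hH : IsClosed (H : Set G))
    (hHL : H.relIndex L ≠ 0) {x : G} (hxH : x ∈ H) (hxL : x ∈ L) : (H : Set G) ∈ 𝓝[L] x := by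
  have : (H.subgroupOf L).FiniteIndex := ⟨hHL⟩
  have hopen : IsOpen (H.subgroupOf L : Set L) :=
    Subgroup.isOpen_of_isClosed_of_finiteIndex _ (hH.preimage continuous_subtype_val)
  have hmem : (H.subgroupOf L : Set L) ∈ 𝓝 ⟨x, hxL⟩ := hopen.mem_nhds hxH
  rw [mem_nhds_subtype_iff_nhdsWithin] at hmem
  exact Filter.mem_of_superset hmem (Set.image_subset_iff.mpr fun _ h ↦ h)

theorem subset_closure_inf_sup_of_subset_prodSubgroup {K : Type*} [CommGroup K]
    [TopologicalSpace K] [IsTopologicalGroup K] {Λ K₁ K₂ : Subgroup K}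
    (hsub : (K₂ : Set K) ⊆ prodSubgroup Λ K₁)
    (hdense₁ : (K₁ : Set K) ⊆ closure (Λ ⊓ K₁ : Subgroup K)) :
    (K₂ : Set K) ⊆ closure (Λ ⊓ (K₂ ⊔ K₁) : Subgroup K) := by
  intro x hx
  obtain ⟨l, hl, k, hk, rfl⟩ := hsub hx
  have hlK : l ∈ K₂ ⊔ K₁ := by
    simpa using
      (K₂ ⊔ K₁).mul_mem (Subgroup.mem_sup_left hx) (Subgroup.mem_sup_right (K₁.inv_mem hk))
  have hl' : l ∈ (Λ ⊓ (K₂ ⊔ K₁)).topologicalClosure := Subgroup.le_topologicalClosure _ ⟨hl, hlK⟩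
  have hk' : k ∈ (Λ ⊓ (K₂ ⊔ K₁)).topologicalClosure :=
    closure_mono (inf_le_inf_left Λ le_sup_right) (hdense₁ hk)
  exact mul_mem hl' hk'

theorem dense_intersection_of_commensurate_general
    {K : Type*} [CommGroup K] [TopologicalSpace K] [IsTopologicalGroup K]
    (Λ : Subgroup K)
    (K₁ K₂ : Subgroup K) (h₂ : IsClosed (K₂ : Set K))
    (hcomm : Subgroup.Commensurable K₁ K₂)
    (hsub : (K₂ : Set K) ⊆ (prodSubgroup Λ K₁ : Set K))
    (hdense₁ : (K₁ : Set K) ⊆ closure ((Λ ⊓ K₁ : Subgroup K) : Set K)) :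
    (K₂ : Set K) ⊆ closure ((Λ ⊓ K₂ : Subgroup K) : Set K) := by
  intro x hx
  have hfin : K₂.relIndex (K₂ ⊔ K₁) ≠ 0 := by
    rw [Subgroup.relIndex_sup_left]
    exact hcomm.2
  have hK₂_nhds : (K₂ : Set K) ∈ 𝓝[(Λ ⊓ (K₂ ⊔ K₁) : Subgroup K)] x :=
    nhdsWithin_mono x (fun _ h ↦ h.2) <| Subgroup.mem_nhdsWithin_of_isClosed_of_relIndex_ne_zero
      h₂ hfin hx (Subgroup.mem_sup_left hx)
  refine closure_mono ?_ (mem_closure_inter_of_mem_nhdsWithin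
    (subset_closure_inf_sup_of_subset_prodSubgroup hsub hdense₁ hx) hK₂_nhds)
  exact fun _ h ↦ ⟨h.1.1, h.2⟩

/-- Let `K` be a compact Hausdorff abelian topological group with a countable
dense subgroup `Λ`, and `K₁, K₂ ≤ K` closed subgroups.  Assume `K₁` and `K₂` are commensurate
and `K₂ ⊆ ΛK₁`.  If `Λ ∩ K₁` is dense in `K₁`, then `Λ ∩ K₂` is dense in `K₂`. -/
theorem dense_intersection_of_commensurate
    {K : Type*} [CommGroup K] [TopologicalSpace K] [IsTopologicalGroup K]
    [CompactSpace K] [T2Space K]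
    (Λ : Subgroup K) (hΛcount : Countable Λ) (hΛdense : Dense (Λ : Set K))
    (K₁ K₂ : Subgroup K) (h₁ : IsClosed (K₁ : Set K)) (h₂ : IsClosed (K₂ : Set K))
    (hcomm : Subgroup.Commensurable K₁ K₂)
    (hsub : (K₂ : Set K) ⊆ (prodSubgroup Λ K₁ : Set K))
    (hdense₁ : (K₁ : Set K) ⊆ closure ((Λ ⊓ K₁ : Subgroup K) : Set K)) :
    (K₂ : Set K) ⊆ closure ((Λ ⊓ K₂ : Subgroup K) : Set K) :=
  dense_intersection_of_commensurate_general Λ K₁ K₂ h₂ hcomm hsub hdense₁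
end

section
/- Let K be a compact Hausdorff abelian topological group with a countable dense subgroup Λ, and let K₁, K₂ ≤ K be closed subgroups such that Λ ∩ Kᵢ is dense in Kᵢ for i = 1, 2. Then the following statements are equivalent: (a) Λ ∩ K₁ and Λ ∩ K₂ are commensurate; (b) K₁ and K₂ are commensurate; (c) ΛK₁ = ΛK₂. -/
open scoped Pointwise

theorem prodSubgroup_eq_sup {K : Type*} [CommGroup K] (A B : Subgroup K) :
    prodSubgroup A B = A ⊔ B := by
  ext x
  simp only [Subgroup.mem_sup, eq_comm]
  rfl

namespace Subgroup

variable {G : Type*} [Group G]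

theorem relIndex_inf_inf_ne_zero {H K : Subgroup G} (L : Subgroup G) (h : H.relIndex K ≠ 0) :
    (L ⊓ H).relIndex (L ⊓ K) ≠ 0 := by
  have hinf : (L ⊓ H) ⊓ (L ⊓ K) = H ⊓ (L ⊓ K) := by
    rw [inf_inf_inf_comm, inf_idem, inf_left_comm]
  rw [← inf_relIndex_right, hinf, inf_relIndex_right]
  exact fun h0 => h (relIndex_eq_zero_of_le_right inf_le_right h0)

theorem Commensurable.inf_left {H K : Subgroup G} (h : Commensurable H K) (L : Subgroup G) :
    Commensurable (L ⊓ H) (L ⊓ K) :=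
  ⟨relIndex_inf_inf_ne_zero L h.1, relIndex_inf_inf_ne_zero L h.2⟩

variable [TopologicalSpace G] [IsTopologicalGroup G]

theorem topologicalClosure_eq_of_le {H K : Subgroup G} (hHK : H ≤ K) (hK : IsClosed (K : Set G))
    (hdense : K ≤ H.topologicalClosure) : H.topologicalClosure = K :=
  le_antisymm (topologicalClosure_minimal H hHK hK) hdense

theorem relIndex_topologicalClosure_ne_zero {H L : Subgroup G} (h : H.relIndex L ≠ 0) :
    H.topologicalClosure.relIndex L.topologicalClosure ≠ 0 := by
  have : (H.subgroupOf L).FiniteIndex := ⟨h⟩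
  let rep : L ⧸ H.subgroupOf L → G := fun q => (q.out : G)
  have hcover : (L : Set G) ⊆ Set.range rep * H := by
    intro l hl
    obtain ⟨c, hc⟩ := QuotientGroup.mk_out_eq_mul (H.subgroupOf L) ⟨l, hl⟩
    refine ⟨_, Set.mem_range_self (QuotientGroup.mk ⟨l, hl⟩), ((c : L) : G)⁻¹, H.inv_mem c.2, ?_⟩
    simp [rep, hc]
  have hcover' : (L.topologicalClosure : Set G) ⊆ Set.range rep * H.topologicalClosure :=
    closure_minimal (hcover.trans (Set.mul_subset_mul_left H.le_topologicalClosure))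
      (H.isClosed_topologicalClosure.mul_left_of_isCompact (Set.finite_range rep).isCompact)
  let φ : L ⧸ H.subgroupOf L → L.topologicalClosure ⧸ H.topologicalClosure.subgroupOf
      L.topologicalClosure := fun q => QuotientGroup.mk ⟨rep q, L.le_topologicalClosure q.out.2⟩
  have hφ : Function.Surjective φ := by
    rintro ⟨x, hx⟩
    obtain ⟨_, ⟨q, rfl⟩, c, hc, hqc⟩ := hcover' hx
    refine ⟨q, QuotientGroup.eq.mpr ?_⟩
    simpa only [mem_subgroupOf, SetLike.mem_coe, ← hqc, coe_mul, InvMemClass.coe_inv,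
      inv_mul_cancel_left] using hc
  have : Finite (L.topologicalClosure ⧸ H.topologicalClosure.subgroupOf L.topologicalClosure) :=
    Finite.of_surjective φ hφ
  exact index_ne_zero_of_finite

theorem Commensurable.topologicalClosure {H K : Subgroup G} (h : Commensurable H K) :
    Commensurable H.topologicalClosure K.topologicalClosure :=
  ⟨relIndex_topologicalClosure_ne_zero h.1, relIndex_topologicalClosure_ne_zero h.2⟩

theorem dense_subgroupOf {Λ K : Subgroup G} (hdense : K ≤ (Λ ⊓ K).topologicalClosure) :
    Dense (Λ.subgroupOf K : Set K) := by
  rw [Topology.IsInducing.subtypeVal.dense_iff]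
  intro x
  have hdense' : (K : Set G) ⊆ _root_.closure ((Λ ⊓ K : Subgroup G) : Set G) := hdense
  convert hdense' x.2 using 2
  ext y
  simp [mem_subgroupOf, and_comm]

theorem le_sup_of_relIndex_ne_zero {Λ H K : Subgroup G} (hH : IsClosed (H : Set G))
    (hdense : K ≤ (Λ ⊓ K).topologicalClosure) (h : H.relIndex K ≠ 0) : K ≤ Λ ⊔ H := by
  have : (H.subgroupOf K).FiniteIndex := ⟨h⟩
  have hopen : IsOpen (H.subgroupOf K : Set K) :=
    isOpen_of_isClosed_of_finiteIndex _ (hH.preimage continuous_subtype_val)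
  intro k hk
  obtain ⟨l, hl, hkl⟩ := (dense_subgroupOf hdense).exists_mem_open
    (hopen.preimage (continuous_const_mul ⟨k, hk⟩⁻¹)) ⟨⟨k, hk⟩, by simp⟩
  have hlk : (l : G)⁻¹ * k ∈ H := by simpa using H.inv_mem hkl
  simpa using mul_mem_sup (mem_subgroupOf.mp hl) hlk

theorem isOpen_of_countable_quotient [BaireSpace G] {H : Subgroup G} (hH : IsClosed (H : Set G))
    [Countable (G ⧸ H)] : IsOpen (H : Set G) := by
  have : T1Space (G ⧸ H) := QuotientGroup.t1Space_iff.mpr hH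
  obtain ⟨q, g, hg⟩ := nonempty_interior_of_iUnion_of_closed
    (f := fun q : G ⧸ H => (QuotientGroup.mk : G → G ⧸ H) ⁻¹' {q})
    (fun q => isClosed_singleton.preimage QuotientGroup.continuous_mk)
    (by rw [← Set.preimage_iUnion, Set.iUnion_of_singleton, Set.preimage_univ])
  have hgq : (g : G ⧸ H) = q := interior_subset (s := QuotientGroup.mk ⁻¹' {q}) hg
  refine isOpen_of_mem_nhds H (g := 1) ?_
  have hnhds := (continuous_const_mul g).continuousAt.preimage_mem_nhds
    (x := 1) (by simpa using mem_interior_iff_mem_nhds.mp hg)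
  refine Filter.mem_of_superset hnhds fun x hx => ?_
  simpa using QuotientGroup.eq.mp (hgq.trans hx.symm)

theorem relIndex_ne_zero_of_le_sup [CompactSpace G] {Λ H K : Subgroup G} [H.Normal] [Countable Λ]
    (hH : IsClosed (H : Set G)) (hK : IsClosed (K : Set G)) (hle : K ≤ Λ ⊔ H) :
    H.relIndex K ≠ 0 := by
  have : CompactSpace K := isCompact_iff_compactSpace.mp hK.isCompact
  -- `K ⧸ H` embeds in `(Λ ⊔ H) ⧸ H ≃ Λ ⧸ (Λ ⊓ H)`, a quotient of a countable group.
  have : Countable (Λ ⧸ H.subgroupOf Λ) := QuotientGroup.mk_surjective.countable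
  have : Countable (↥(Λ ⊔ H) ⧸ H.subgroupOf (Λ ⊔ H)) :=
    (QuotientGroup.quotientInfEquivProdNormalQuotient Λ H).toEquiv.surjective.countable
  have : Countable (K ⧸ H.subgroupOf K) :=
    (quotientSubgroupOfEmbeddingOfLE H hle).injective.countable
  have := (H.subgroupOf K).quotient_finite_of_isOpen
    (isOpen_of_countable_quotient (hH.preimage continuous_subtype_val))
  exact index_ne_zero_of_finite

end Subgroup

theorem commensurable_tfae_general
    {K : Type*} [CommGroup K] [TopologicalSpace K] [IsTopologicalGroup K]
    [CompactSpace K]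
    (Λ : Subgroup K) (hΛcount : Countable Λ)
    (K₁ K₂ : Subgroup K) (h₁ : IsClosed (K₁ : Set K)) (h₂ : IsClosed (K₂ : Set K))
    (hdense₁ : (K₁ : Set K) ⊆ closure ((Λ ⊓ K₁ : Subgroup K) : Set K))
    (hdense₂ : (K₂ : Set K) ⊆ closure ((Λ ⊓ K₂ : Subgroup K) : Set K)) :
    (Subgroup.Commensurable (Λ ⊓ K₁) (Λ ⊓ K₂) ↔ Subgroup.Commensurable K₁ K₂) ∧
    (Subgroup.Commensurable K₁ K₂ ↔ prodSubgroup Λ K₁ = prodSubgroup Λ K₂) := by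
  have hclosure₁ := Subgroup.topologicalClosure_eq_of_le inf_le_right h₁ hdense₁
  have hclosure₂ := Subgroup.topologicalClosure_eq_of_le inf_le_right h₂ hdense₂
  refine ⟨⟨fun h => hclosure₁ ▸ hclosure₂ ▸ h.topologicalClosure, fun h => h.inf_left Λ⟩, ?_⟩
  rw [prodSubgroup_eq_sup, prodSubgroup_eq_sup]
  constructor
  · rintro ⟨h₁₂, h₂₁⟩
    exact le_antisymm
      (sup_le le_sup_left (Subgroup.le_sup_of_relIndex_ne_zero h₂ hdense₁ h₂₁))
      (sup_le le_sup_left (Subgroup.le_sup_of_relIndex_ne_zero h₁ hdense₂ h₁₂))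
  · intro h
    exact ⟨Subgroup.relIndex_ne_zero_of_le_sup h₁ h₂ (le_sup_right.trans h.ge),
      Subgroup.relIndex_ne_zero_of_le_sup h₂ h₁ (le_sup_right.trans h.le)⟩

/-- Let `K` be a compact Hausdorff abelian topological group with a countable
dense subgroup `Λ`, and let `K₁, K₂ ≤ K` be closed subgroups such that `Λ ∩ Kᵢ` is dense in
`Kᵢ` for `i = 1, 2`.  Then the following are equivalent: (a) `Λ ∩ K₁` and `Λ ∩ K₂` are
commensurate; (b) `K₁` and `K₂` are commensurate; (c) `ΛK₁ = ΛK₂`. -/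
theorem commensurable_tfae
    {K : Type*} [CommGroup K] [TopologicalSpace K] [IsTopologicalGroup K]
    [CompactSpace K] [T2Space K]
    (Λ : Subgroup K) (hΛcount : Countable Λ) (hΛdense : Dense (Λ : Set K))
    (K₁ K₂ : Subgroup K) (h₁ : IsClosed (K₁ : Set K)) (h₂ : IsClosed (K₂ : Set K))
    (hdense₁ : (K₁ : Set K) ⊆ closure ((Λ ⊓ K₁ : Subgroup K) : Set K))
    (hdense₂ : (K₂ : Set K) ⊆ closure ((Λ ⊓ K₂ : Subgroup K) : Set K)) :
    (Subgroup.Commensurable (Λ ⊓ K₁) (Λ ⊓ K₂) ↔ Subgroup.Commensurable K₁ K₂) ∧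
    (Subgroup.Commensurable K₁ K₂ ↔ prodSubgroup Λ K₁ = prodSubgroup Λ K₂) :=
  commensurable_tfae_general Λ hΛcount K₁ K₂ h₁ h₂ hdense₁ hdense₂
end

section
/- Let T ⊆ ℕ^{<ℕ} be a tree. An element g ∈ ℚ^(ℕ^{<ℕ}) belongs to G(T) if and only if the following three conditions hold: (1) g_σ = 0 for every σ ∉ T; (2) for every σ ∈ T and every prime p such that p ≠ p_{2|σ|}, p ≠ p_{2|σ|+1}, and (if |σ| ≥ 1) p ≠ p_{2|σ|−1}, the rational number g_σ is p-integral; (3) for every σ ∈ T, the rational number g_σ + Σ_{b∈ℕ} g_{σb} is p_{2|σ|+1}-integral. -/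
/-- A tree of finite sequences of natural numbers: a set of lists closed under
taking initial segments. -/
def IsTree (T : Set (List ℕ)) : Prop :=
  ∀ σ ∈ T, ∀ τ : List ℕ, τ <+: σ → τ ∈ T

/-- `primeN n` is the `n`-th prime `p_n` (so `p₀ = 2 < p₁ = 3 < ⋯`). -/
noncomputable def primeN (n : ℕ) : ℕ := Nat.nth Nat.Prime n

/-- The generating set of Hjorth's group `G(T)`:
`{p_{2|σ|}^{-k} δ_σ : σ ∈ T, k ∈ ℕ} ∪ {p_{2|σ|-1}^{-k} (δ_σ - δ_{σ⁻}) : σ ∈ T, |σ| ≥ 1, k ∈ ℕ}`. -/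
noncomputable def hjorthGenSet (T : Set (List ℕ)) : Set (List ℕ →₀ ℚ) :=
  {f | ∃ σ ∈ T, ∃ k : ℕ,
      f = ((primeN (2 * σ.length) : ℚ) ^ k)⁻¹ • Finsupp.single σ (1 : ℚ)} ∪
  {f | ∃ σ ∈ T, σ ≠ [] ∧ ∃ k : ℕ,
      f = ((primeN (2 * σ.length - 1) : ℚ) ^ k)⁻¹ •
        (Finsupp.single σ (1 : ℚ) - Finsupp.single σ.dropLast (1 : ℚ))}

/-- Hjorth's group `G(T) ≤ ℚ^(ℕ^{<ℕ})` associated with a tree `T`. -/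
noncomputable def hjorthGroup (T : Set (List ℕ)) : AddSubgroup (List ℕ →₀ ℚ) :=
  AddSubgroup.closure (hjorthGenSet T)

/-- A rational number is `p`-integral if `p` does not divide its denominator. -/
def PIntegral (p : ℕ) (q : ℚ) : Prop := ¬ (p ∣ q.den)


/-!
At a node `σ` of height `n` the generators only involve the primes `p_{2n}` and `p_{2n-1}`, so
they satisfy (1)–(3); since these conditions define a subgroup, all of `G(T)` satisfies them.
Conversely, let `g` satisfy (1)–(3) and let `σ` be a node of maximal length in the support of
`g`. As `g` vanishes on the children of `σ`, condition (3) makes `g_σ` integral at `p_{2n+1}`,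
so by (2) its denominator is `p_{2n}^i p_{2n-1}^j`, and partial fractions write `g_σ = u + w`
with `u δ_σ` and `w (δ_σ - δ_{σ⁻})` in `G(T)`. Subtracting both moves the mass at `σ` to its
parent, which lowers `Σ_{τ ∈ supp g} (|τ| + 1)`; induction on this weight finishes the proof.
-/

open Finsupp

lemma primeN_prime (n : ℕ) : (primeN n).Prime :=
  Nat.prime_nth_prime n

lemma primeN_injective : Function.Injective primeN :=
  Nat.nth_injective Nat.infinite_setOfPred_prime

lemma primeN_odd_ne_even (a b : ℕ) : primeN (2 * a + 1) ≠ primeN (2 * b) :=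
  primeN_injective.ne (by omega)

lemma List.length_dropLast_add_one {α : Type*} {l : List α} (hl : l ≠ []) :
    l.dropLast.length + 1 = l.length := by
  rw [List.length_dropLast]
  have := List.length_pos_iff.2 hl
  omega

namespace PIntegral

variable {p : ℕ}

lemma zero (hp : p.Prime) : PIntegral p 0 := by
  simpa [PIntegral] using hp.ne_one

lemma add (hp : p.Prime) {q r : ℚ} (hq : PIntegral p q) (hr : PIntegral p r) :
    PIntegral p (q + r) := fun h =>
  (hp.dvd_mul.1 (h.trans (Rat.add_den_dvd q r))).elim hq hr

lemma neg {q : ℚ} (hq : PIntegral p q) : PIntegral p (-q) := by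
  simpa [PIntegral] using hq

lemma sub (hp : p.Prime) {q r : ℚ} (hq : PIntegral p q) (hr : PIntegral p r) :
    PIntegral p (q - r) := by
  simpa [sub_eq_add_neg] using hq.add hp hr.neg

lemma ite (hp : p.Prime) {P : Prop} [Decidable P] {q : ℚ} (hq : P → PIntegral p q) :
    PIntegral p (if P then q else 0) := by
  split_ifs with h
  exacts [hq h, zero hp]

lemma inv_pow (hp : p.Prime) {P : ℕ} (hP : P.Prime) (hne : p ≠ P) (k : ℕ) :
    PIntegral p ((P : ℚ) ^ k)⁻¹ := by
  intro h
  rw [← Nat.cast_pow, Rat.inv_natCast_den_of_pos (pow_pos hP.pos k)] at h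
  exact hne ((Nat.prime_dvd_prime_iff_eq hp hP).1 (hp.dvd_of_dvd_pow h))

end PIntegral

lemma Rat.exists_eq_div_add_div_of_den_eq_mul {q : ℚ} {a b : ℕ} (hab : a.Coprime b)
    (hq : q.den = a * b) : ∃ m n : ℤ, q = m / a + n / b := by
  obtain ⟨x, y, hxy⟩ := Nat.isCoprime_iff_coprime.2 hab
  have ha : (a : ℚ) ≠ 0 := by exact_mod_cast left_ne_zero_of_mul (hq ▸ q.den_nz)
  have hb : (b : ℚ) ≠ 0 := by exact_mod_cast right_ne_zero_of_mul (hq ▸ q.den_nz)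
  have hxyQ : (x : ℚ) * a + y * b = 1 := by exact_mod_cast hxy
  refine ⟨q.num * y, q.num * x, ?_⟩
  calc q = q.num / q.den := (Rat.num_div_den q).symm
    _ = _ := by
      rw [hq, Nat.cast_mul, div_add_div _ _ ha hb, div_left_inj' (mul_ne_zero ha hb)]
      push_cast
      linear_combination -(q.num : ℚ) * hxyQ

lemma Rat.exists_eq_div_pow_add_div_pow {q : ℚ} {P P' : ℕ} (hP : P.Prime)
    (hq : ∀ p, p.Prime → p ∣ q.den → p = P ∨ p = P') :
    ∃ (m n : ℤ) (i j : ℕ), q = m / (P : ℚ) ^ i + n / (P' : ℚ) ^ j := by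
  obtain ⟨j, hj⟩ : ∃ j, q.den / P ^ q.den.factorization P = P' ^ j := by
    refine ⟨_, Nat.eq_prime_pow_of_unique_prime_dvd (Nat.ordCompl_pos P q.den_nz).ne'
      fun hd hdb => (hq _ hd (hdb.trans (Nat.ordCompl_dvd _ _))).resolve_left ?_⟩
    rintro rfl
    exact Nat.not_dvd_ordCompl hP q.den_nz hdb
  obtain ⟨m, n, hmn⟩ := Rat.exists_eq_div_add_div_of_den_eq_mul
    ((Nat.coprime_ordCompl hP q.den_nz).pow_left _) (Nat.ordProj_mul_ordCompl_eq_self _ _).symm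
  refine ⟨m, n, q.den.factorization P, j, ?_⟩
  rw [hj] at hmn
  exact_mod_cast hmn

section childSum

variable {α M : Type*} [AddCommMonoid M]

lemma finite_support_children (g : List α →₀ M) (τ : List α) :
    (Function.support fun b => g (τ ++ [b])).Finite :=
  g.hasFiniteSupport.preimage ((List.append_right_injective τ).comp List.singleton_injective).injOn

noncomputable def childSum (τ : List α) : (List α →₀ M) →+ M where
  toFun g := ∑ᶠ b, g (τ ++ [b])
  map_zero' := finsum_zero
  map_add' g₁ g₂ :=
    finsum_add_distrib (finite_support_children g₁ τ) (finite_support_children g₂ τ)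

lemma childSum_apply (τ : List α) (g : List α →₀ M) : childSum τ g = ∑ᶠ b, g (τ ++ [b]) := rfl

lemma childSum_single [DecidableEq α] (τ ρ : List α) (c : M) :
    childSum τ (single ρ c) = if ρ ≠ [] ∧ ρ.dropLast = τ then c else 0 := by
  rw [childSum_apply]
  split_ifs with h
  · obtain ⟨hne, rfl⟩ := h
    rw [finsum_eq_single _ (ρ.getLast hne), List.dropLast_append_getLast, single_eq_same]
    intro b hb
    refine single_eq_of_ne fun hρ => hb ?_
    simpa using hρ.trans (List.dropLast_append_getLast hne).symm
  · refine finsum_eq_zero_of_forall_eq_zero fun b => single_eq_of_ne fun hρ => h ?_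
    simp [← hρ]

end childSum

noncomputable def hjorthConditions (T : Set (List ℕ)) : AddSubgroup (List ℕ →₀ ℚ) where
  carrier := {g | (∀ σ : List ℕ, σ ∉ T → g σ = 0) ∧
      (∀ σ ∈ T, ∀ p : ℕ, p.Prime → p ≠ primeN (2 * σ.length) →
        p ≠ primeN (2 * σ.length + 1) → (σ ≠ [] → p ≠ primeN (2 * σ.length - 1)) →
        PIntegral p (g σ)) ∧
      (∀ σ ∈ T, PIntegral (primeN (2 * σ.length + 1)) (g σ + childSum σ g))}
  zero_mem' := ⟨fun _ _ => rfl, fun _ _ _ hp _ _ _ => PIntegral.zero hp,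
    fun _ _ => by simpa using PIntegral.zero (primeN_prime _)⟩
  add_mem' := by
    rintro g₁ g₂ ⟨h₁, h₂, h₃⟩ ⟨h₁', h₂', h₃'⟩
    refine ⟨fun σ hσ => by simp [h₁ σ hσ, h₁' σ hσ], fun σ hσ p hp hA hB hC => ?_, fun σ hσ => ?_⟩
    · exact (h₂ σ hσ p hp hA hB hC).add hp (h₂' σ hσ p hp hA hB hC)
    · rw [coe_add, Pi.add_apply, map_add, add_add_add_comm]
      exact (h₃ σ hσ).add (primeN_prime _) (h₃' σ hσ)
  neg_mem' := by
    rintro g ⟨h₁, h₂, h₃⟩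
    refine ⟨fun σ hσ => by simp [h₁ σ hσ], fun σ hσ p hp hA hB hC => ?_, fun σ hσ => ?_⟩
    · exact (h₂ σ hσ p hp hA hB hC).neg
    · rw [coe_neg, Pi.neg_apply, map_neg, ← neg_add]
      exact (h₃ σ hσ).neg

lemma single_mem_hjorthConditions {T : Set (List ℕ)} {σ : List ℕ} (hσ : σ ∈ T) {c : ℚ}
    (hc : ∀ p, p.Prime → p ≠ primeN (2 * σ.length) → PIntegral p c) :
    single σ c ∈ hjorthConditions T := by
  classical
  refine ⟨fun τ hτ => single_eq_of_ne fun h => hτ (h ▸ hσ), fun τ _ p hp hA _ _ => ?_,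
    fun τ _ => ?_⟩
  · rw [single_apply]
    exact PIntegral.ite hp fun h => hc p hp (h ▸ hA)
  · rw [single_apply, childSum_single]
    have hp := primeN_prime (2 * τ.length + 1)
    exact (PIntegral.ite hp fun _ => hc _ hp (primeN_odd_ne_even _ _)).add hp
      (PIntegral.ite hp fun _ => hc _ hp (primeN_odd_ne_even _ _))

lemma single_sub_single_dropLast_mem_hjorthConditions {T : Set (List ℕ)} (hT : IsTree T)
    {σ : List ℕ} (hσ : σ ∈ T) (hne : σ ≠ []) {c : ℚ}
    (hc : ∀ p, p.Prime → p ≠ primeN (2 * σ.length - 1) → PIntegral p c) :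
    single σ c - single σ.dropLast c ∈ hjorthConditions T := by
  classical
  have hlen := List.length_dropLast_add_one hne
  have hσ' : σ.dropLast ∈ T := hT σ hσ _ (List.dropLast_prefix σ)
  refine ⟨fun τ hτ => ?_, fun τ _ p hp _ hB hC => ?_, fun τ _ => ?_⟩
  · rw [coe_sub, Pi.sub_apply, single_eq_of_ne (by rintro rfl; exact hτ hσ),
      single_eq_of_ne (by rintro rfl; exact hτ hσ'), sub_zero]
  · rw [coe_sub, Pi.sub_apply, single_apply, single_apply]
    refine (PIntegral.ite hp fun h => ?_).sub hp (PIntegral.ite hp fun h => ?_)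
    · subst h
      exact hc p hp (hC hne)
    · subst h
      exact hc p hp (by rwa [show 2 * σ.length - 1 = 2 * σ.dropLast.length + 1 by omega])
  · have hp := primeN_prime (2 * τ.length + 1)
    rw [coe_sub, Pi.sub_apply, map_sub, childSum_single, childSum_single, single_apply,
      single_apply, if_congr (and_iff_right hne) rfl rfl, sub_add_sub_cancel]
    -- `δ_σ - δ_{σ⁻}` contributes to the sum at `τ` only if `τ` is `σ` or the grandparent of `σ`
    refine (PIntegral.ite hp fun h => hc _ hp ?_).sub hp (PIntegral.ite hp fun h => hc _ hp ?_)
    · subst h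
      exact primeN_injective.ne (by omega)
    · have := List.length_dropLast_add_one h.1
      obtain ⟨-, rfl⟩ := h
      exact primeN_injective.ne (by omega)

lemma hjorthGroup_le_hjorthConditions {T : Set (List ℕ)} (hT : IsTree T) :
    hjorthGroup T ≤ hjorthConditions T := by
  refine (AddSubgroup.closure_le _).2 ?_
  rintro f (⟨σ, hσ, k, rfl⟩ | ⟨σ, hσ, hne, k, rfl⟩)
  · rw [smul_single_one]
    exact single_mem_hjorthConditions hσ fun p hp hp' =>
      PIntegral.inv_pow hp (primeN_prime _) hp' k
  · rw [smul_sub, smul_single_one, smul_single_one]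
    exact single_sub_single_dropLast_mem_hjorthConditions hT hσ hne fun p hp hp' =>
      PIntegral.inv_pow hp (primeN_prime _) hp' k

section hjorthGroup

variable {T : Set (List ℕ)} {σ : List ℕ}

lemma single_intCast_div_pow_mem_hjorthGroup (hσ : σ ∈ T) (m : ℤ) (k : ℕ) :
    single σ ((m : ℚ) / (primeN (2 * σ.length) : ℚ) ^ k) ∈ hjorthGroup T := by
  rw [div_eq_mul_inv, ← zsmul_eq_mul, ← smul_single, ← smul_single_one]
  exact zsmul_mem (AddSubgroup.subset_closure (k := hjorthGenSet T) (Or.inl ⟨σ, hσ, k, rfl⟩)) m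

lemma single_sub_single_dropLast_intCast_div_pow_mem_hjorthGroup (hσ : σ ∈ T) (hne : σ ≠ [])
    (m : ℤ) (k : ℕ) :
    single σ ((m : ℚ) / (primeN (2 * σ.length - 1) : ℚ) ^ k) -
      single σ.dropLast ((m : ℚ) / (primeN (2 * σ.length - 1) : ℚ) ^ k) ∈ hjorthGroup T := by
  have hgen : single σ ((m : ℚ) / (primeN (2 * σ.length - 1) : ℚ) ^ k) -
      single σ.dropLast ((m : ℚ) / (primeN (2 * σ.length - 1) : ℚ) ^ k) =
      m • (((primeN (2 * σ.length - 1) : ℚ) ^ k)⁻¹ • (single σ 1 - single σ.dropLast 1)) := by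
    rw [smul_sub, smul_single_one, smul_single_one, smul_sub, smul_single, smul_single,
      zsmul_eq_mul, div_eq_mul_inv]
  rw [hgen]
  exact zsmul_mem (AddSubgroup.subset_closure (k := hjorthGenSet T) (Or.inr ⟨σ, hσ, hne, k, rfl⟩)) m

lemma exists_single_sub_single_dropLast_mem_hjorthGroup (hσ : σ ∈ T) {q : ℚ}
    (hq : ∀ p, p.Prime → p ∣ q.den →
      p = primeN (2 * σ.length) ∨ p = primeN (2 * σ.length - 1)) :
    ∃ w : ℚ, (σ = [] → w = 0) ∧ single σ q - single σ.dropLast w ∈ hjorthGroup T := by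
  obtain ⟨m, n, i, j, rfl⟩ := Rat.exists_eq_div_pow_add_div_pow (primeN_prime _) hq
  rcases eq_or_ne σ [] with rfl | hne
  · -- at the root `2 * |σ| - 1 = 0` in `ℕ`, so both fractions have a power of `p₀` as denominator
    refine ⟨0, fun _ => rfl, ?_⟩
    rw [single_zero, sub_zero, single_add]
    exact add_mem (single_intCast_div_pow_mem_hjorthGroup hσ m i)
      (single_intCast_div_pow_mem_hjorthGroup hσ n j)
  · refine ⟨n / (primeN (2 * σ.length - 1) : ℚ) ^ j, fun h => absurd h hne, ?_⟩
    rw [single_add, add_sub_assoc]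
    exact add_mem (single_intCast_div_pow_mem_hjorthGroup hσ m i)
      (single_sub_single_dropLast_intCast_div_pow_mem_hjorthGroup hσ hne n j)

end hjorthGroup

section supportWeight

variable {α M : Type*}

def supportWeight [Zero M] (g : List α →₀ M) : ℕ :=
  ∑ τ ∈ g.support, (τ.length + 1)

lemma supportWeight_erase_add_single_dropLast_lt [AddZeroClass M] {g : List α →₀ M}
    {σ : List α} (hσ : σ ∈ g.support) {w : M} (hw : σ = [] → w = 0) :
    supportWeight (g.erase σ + single σ.dropLast w) < supportWeight g := by
  classical
  have hsingle : ∑ τ ∈ (single σ.dropLast w).support, (τ.length + 1) ≤ σ.length := by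
    rcases eq_or_ne σ [] with rfl | hne
    · simp [hw rfl]
    · calc _ ≤ ∑ τ ∈ {σ.dropLast}, (τ.length + 1) :=
            Finset.sum_le_sum_of_subset support_single_subset
        _ = σ.length := by rw [Finset.sum_singleton, List.length_dropLast_add_one hne]
  calc supportWeight (g.erase σ + single σ.dropLast w)
      ≤ ∑ τ ∈ g.support.erase σ ∪ (single σ.dropLast w).support, (τ.length + 1) := by
        rw [← support_erase]
        exact Finset.sum_le_sum_of_subset support_add
    _ ≤ ∑ τ ∈ g.support.erase σ, (τ.length + 1) +
          ∑ τ ∈ (single σ.dropLast w).support, (τ.length + 1) := by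
        rw [← Finset.sum_union_inter]
        exact Nat.le_add_right _ _
    _ < ∑ τ ∈ g.support.erase σ, (τ.length + 1) + (σ.length + 1) := by omega
    _ = supportWeight g := Finset.sum_erase_add _ _ hσ

end supportWeight

lemma den_prime_dvd_of_mem_hjorthConditions {T : Set (List ℕ)} {g : List ℕ →₀ ℚ}
    (hg : g ∈ hjorthConditions T) {σ : List ℕ} (hσ : σ ∈ T) (hleaf : ∀ b, g (σ ++ [b]) = 0)
    {p : ℕ} (hp : p.Prime) (hdvd : p ∣ (g σ).den) :
    p = primeN (2 * σ.length) ∨ p = primeN (2 * σ.length - 1) := by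
  by_contra! h
  have hodd : p ≠ primeN (2 * σ.length + 1) := by
    rintro rfl
    have := hg.2.2 σ hσ
    rw [childSum_apply, finsum_eq_zero_of_forall_eq_zero hleaf, add_zero] at this
    exact this hdvd
  exact hg.2.1 σ hσ p hp h.1 hodd (fun _ => h.2) hdvd

lemma mem_hjorthGroup_of_mem_hjorthConditions {T : Set (List ℕ)} (hT : IsTree T)
    {g : List ℕ →₀ ℚ} (hg : g ∈ hjorthConditions T) : g ∈ hjorthGroup T := by
  induction hn : supportWeight g using Nat.strong_induction_on generalizing g with
  | _ n ih =>
  rcases eq_or_ne g 0 with rfl | hne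
  · exact zero_mem _
  obtain ⟨σ, hσ, hmax⟩ := g.support.exists_max_image List.length (support_nonempty_iff.2 hne)
  have hσT : σ ∈ T := by
    by_contra h
    exact mem_support_iff.1 hσ (hg.1 σ h)
  have hleaf : ∀ b, g (σ ++ [b]) = 0 := fun b => by
    by_contra h
    simpa using hmax _ (mem_support_iff.2 h)
  obtain ⟨w, hw, hmem⟩ := exists_single_sub_single_dropLast_mem_hjorthGroup hσT
    fun p hp => den_prime_dvd_of_mem_hjorthConditions hg hσT hleaf hp
  have hsub : g - (single σ (g σ) - single σ.dropLast w) = g.erase σ + single σ.dropLast w := by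
    rw [← single_add_erase σ g]
    simp
  have hrest : g.erase σ + single σ.dropLast w ∈ hjorthGroup T := by
    refine ih _ (hn ▸ supportWeight_erase_add_single_dropLast_lt hσ hw) ?_ rfl
    exact hsub ▸ sub_mem hg (hjorthGroup_le_hjorthConditions hT hmem)
  simpa [← hsub] using add_mem hrest hmem

/-- For a tree `T ⊆ ℕ^{<ℕ}`, an element `g ∈ ℚ^(ℕ^{<ℕ})` belongs to
`G(T)` if and only if: (1) `g_σ = 0` for `σ ∉ T`; (2) for `σ ∈ T` and every prime `p`
different from `p_{2|σ|}`, `p_{2|σ|+1}` and (when `|σ| ≥ 1`) `p_{2|σ|−1}`, the number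
`g_σ` is `p`-integral; (3) for every `σ ∈ T`, `g_σ + Σ_b g_{σb}` is `p_{2|σ|+1}`-integral. -/
theorem mem_hjorthGroup_iff (T : Set (List ℕ)) (hT : IsTree T) (g : List ℕ →₀ ℚ) :
    g ∈ hjorthGroup T ↔
      ((∀ σ : List ℕ, σ ∉ T → g σ = 0) ∧
       (∀ σ ∈ T, ∀ p : ℕ, p.Prime → p ≠ primeN (2 * σ.length) →
          p ≠ primeN (2 * σ.length + 1) →
          (σ ≠ [] → p ≠ primeN (2 * σ.length - 1)) →
          PIntegral p (g σ)) ∧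
       (∀ σ ∈ T, PIntegral (primeN (2 * σ.length + 1))
          (g σ + ∑ᶠ b : ℕ, g (σ ++ [b])))) :=
  ⟨fun hg => hjorthGroup_le_hjorthConditions hT hg, mem_hjorthGroup_of_mem_hjorthConditions hT⟩
end

section
/- Let α, β, γ ∈ 𝕋 be rationally independent, let Λ ≤ 𝕋³ be the subgroup generated by (α,1,α), (1,α,β), (1,1,γ), and let K₁ := 𝕋 × {1} × 𝕋 and K₂ := {1} × 𝕋 × 𝕋. Then Λ is dense in 𝕋³, Λ ∩ K₁ equals the subgroup generated by (α,1,α) and (1,1,γ) and is dense in K₁, and Λ ∩ K₂ is dense in K₂. -/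
/-!
An element of infinite order generates a dense subgroup of `𝕋`. Hence a closed subgroup of
`𝕋³` containing `(1, 1, γ)` contains `{1} × {1} × 𝕋`; if it also contains `(α, 1, δ)`, it
contains `(α, 1, 1)` and so `𝕋 × {1} × {1}`, and similarly `(1, α, β)` gives `{1} × 𝕋 × {1}`.
Applied to the closures of `Λ ∩ K₁` and `Λ ∩ K₂` this shows that they contain `K₁` and `K₂`,
and `K₁ K₂ = 𝕋³` gives the density of `Λ`. Finally `Λ = ⟨(α,1,α), (1,1,γ)⟩ ⊔ ⟨(1,α,β)⟩`, the
first factor lies in `K₁`, and `(1,α,β)ᵇ ∈ K₁` forces `αᵇ = 1`, so the modular law computes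
`Λ ∩ K₁`.
-/

open Subgroup

noncomputable def KOne : Subgroup (Circle × Circle × Circle) :=
  (⊤ : Subgroup Circle).prod ((⊥ : Subgroup Circle).prod (⊤ : Subgroup Circle))

noncomputable def KTwo : Subgroup (Circle × Circle × Circle) :=
  (⊥ : Subgroup Circle).prod ((⊤ : Subgroup Circle).prod (⊤ : Subgroup Circle))

theorem orderOf_eq_zero_of_zpow_eq_one_imp {G : Type*} [Group G] {x : G}
    (h : ∀ n : ℤ, x ^ n = 1 → n = 0) : orderOf x = 0 :=
  orderOf_eq_zero_iff.mpr fun hx =>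
    let ⟨n, hn, hxn⟩ := isOfFinOrder_iff_zpow_eq_one.mp hx
    hn (h n hxn)

theorem Circle.dense_zpowers {u : Circle} (hu : orderOf u = 0) :
    Dense (zpowers u : Set Circle) := by
  have e_apply := AddCircle.homeomorphCircle_apply (one_ne_zero' ℝ)
  obtain ⟨a, rfl⟩ := (AddCircle.homeomorphCircle (one_ne_zero' ℝ)).surjective u
  rw [e_apply] at hu ⊢
  have ha : addOrderOf a = 0 := by
    refine addOrderOf_eq_zero_iff'.mpr fun n hn h => orderOf_eq_zero_iff'.mp hu n hn ?_
    rw [← AddCircle.toCircle_nsmul, h, AddCircle.toCircle_zero]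
  rw [coe_zpowers, ← DenseRange]
  convert (AddCircle.homeomorphCircle (one_ne_zero' ℝ)).surjective.denseRange.comp
    (AddCircle.denseRange_zsmul_iff.mpr ha) (Homeomorph.continuous _) with n
  rw [Function.comp_apply, e_apply, AddCircle.toCircle_zsmul]

theorem MonoidHom.map_mem_of_dense_zpowers {H G : Type*} [Group H] [TopologicalSpace H]
    [Group G] [TopologicalSpace G] {u : H} (hu : Dense (zpowers u : Set H)) {f : H →* G}
    (hf : Continuous f) {T : Subgroup G} (hT : IsClosed (T : Set G)) (hfu : f u ∈ T) (t : H) :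
    f t ∈ T :=
  closure_minimal (zpowers_le.mpr hfu : zpowers u ≤ T.comap f) (hT.preimage hf) (hu t)

section ClosedSubgroupOfTorus

variable {T : Subgroup (Circle × Circle × Circle)}

theorem mk_one_one_mem_of_isClosed (hT : IsClosed (T : Set (Circle × Circle × Circle)))
    {γ : Circle} (hγ : orderOf γ = 0) (h : (1, 1, γ) ∈ T) (t : Circle) : (1, 1, t) ∈ T :=
  MonoidHom.map_mem_of_dense_zpowers (f := (MonoidHom.inr _ _).comp (MonoidHom.inr _ _))
    (Circle.dense_zpowers hγ) (continuous_const.prodMk (continuous_const.prodMk continuous_id))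
    hT h t

theorem KOne_le_of_isClosed (hT : IsClosed (T : Set (Circle × Circle × Circle)))
    {α γ δ : Circle} (hα : orderOf α = 0) (hγ : orderOf γ = 0)
    (h₁ : (α, 1, δ) ∈ T) (h₃ : (1, 1, γ) ∈ T) : KOne ≤ T := by
  have h₃' := mk_one_one_mem_of_isClosed hT hγ h₃
  have h₁' : ∀ t, (t, 1, 1) ∈ T :=
    MonoidHom.map_mem_of_dense_zpowers (f := MonoidHom.inl Circle (Circle × Circle))
      (Circle.dense_zpowers hα) (continuous_id.prodMk continuous_const) hT
      (show (α, 1, 1) ∈ T by simpa using T.mul_mem h₁ (h₃' δ⁻¹))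
  rintro ⟨a, b, c⟩ ⟨-, hb, -⟩
  obtain rfl : b = 1 := hb
  simpa using T.mul_mem (h₁' a) (h₃' c)

theorem KTwo_le_of_isClosed (hT : IsClosed (T : Set (Circle × Circle × Circle)))
    {α β γ : Circle} (hα : orderOf α = 0) (hγ : orderOf γ = 0)
    (h₂ : (1, α, β) ∈ T) (h₃ : (1, 1, γ) ∈ T) : KTwo ≤ T := by
  have h₃' := mk_one_one_mem_of_isClosed hT hγ h₃
  have h₂' : ∀ t, (1, t, 1) ∈ T :=
    MonoidHom.map_mem_of_dense_zpowers (f := (MonoidHom.inr _ _).comp (MonoidHom.inl _ _))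
      (Circle.dense_zpowers hα) (continuous_const.prodMk (continuous_id.prodMk continuous_const))
      hT (show (1, α, 1) ∈ T by simpa using T.mul_mem h₂ (h₃' β⁻¹))
  rintro ⟨a, b, c⟩ ⟨ha, -, -⟩
  obtain rfl : a = 1 := ha
  simpa using T.mul_mem (h₂' b) (h₃' c)

theorem eq_top_of_KOne_le_of_KTwo_le (h₁ : KOne ≤ T) (h₂ : KTwo ≤ T) : T = ⊤ := by
  refine eq_top_iff.mpr fun ⟨a, b, c⟩ _ => ?_
  simpa using T.mul_mem (h₁ (show (a, 1, 1) ∈ KOne from ⟨trivial, rfl, trivial⟩))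
    (h₂ (show (1, b, c) ∈ KTwo from ⟨rfl, trivial, trivial⟩))

end ClosedSubgroupOfTorus

/-- Let `α, β, γ ∈ 𝕋` be rationally independent and let `Λ ≤ 𝕋³` be the
subgroup generated by `(α,1,α)`, `(1,α,β)`, `(1,1,γ)`.  Then `Λ` is dense in `𝕋³`,
`Λ ∩ K₁` equals the subgroup generated by `(α,1,α)` and `(1,1,γ)` and is dense in
`K₁ = 𝕋 × {1} × 𝕋`, and `Λ ∩ K₂` is dense in `K₂ = {1} × 𝕋 × 𝕋`. -/
theorem lambda_dense_and_intersections_dense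
    (α β γ : Circle)
    (hindep : ∀ a b c : ℤ, α ^ a * β ^ b * γ ^ c = 1 → a = 0 ∧ b = 0 ∧ c = 0)
    (Λ : Subgroup (Circle × Circle × Circle))
    (hΛ : Λ = Subgroup.closure {(α, 1, α), (1, α, β), (1, 1, γ)}) :
    Dense (Λ : Set (Circle × Circle × Circle)) ∧
    Λ ⊓ KOne = Subgroup.closure {(α, 1, α), (1, 1, γ)} ∧
    (KOne : Set (Circle × Circle × Circle)) ⊆
      _root_.closure ((Λ ⊓ KOne : Subgroup (Circle × Circle × Circle)) : Set (Circle × Circle × Circle)) ∧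
    (KTwo : Set (Circle × Circle × Circle)) ⊆
      _root_.closure ((Λ ⊓ KTwo : Subgroup (Circle × Circle × Circle)) : Set (Circle × Circle × Circle)) := by
  have hα : orderOf α = 0 :=
    orderOf_eq_zero_of_zpow_eq_one_imp fun n h => (hindep n 0 0 (by simp [h])).1
  have hγ : orderOf γ = 0 :=
    orderOf_eq_zero_of_zpow_eq_one_imp fun n h => (hindep 0 0 n (by simp [h])).2.2
  have h₁Λ : (α, 1, α) ∈ Λ := hΛ ▸ subset_closure (by simp)
  have h₂Λ : (1, α, β) ∈ Λ := hΛ ▸ subset_closure (by simp)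
  have h₃Λ : (1, 1, γ) ∈ Λ := hΛ ▸ subset_closure (by simp)
  have hΛK₁ : Λ ⊓ KOne = Subgroup.closure {(α, 1, α), (1, 1, γ)} := by
    have hsplit : Λ = Subgroup.closure {(α, 1, α), (1, 1, γ)} ⊔ zpowers (1, α, β) := by
      rw [hΛ, zpowers_eq_closure, ← Subgroup.closure_union]
      congr 1
      ext
      simp [or_left_comm]
    have hdisj : zpowers (1, α, β) ⊓ KOne = ⊥ := by
      refine eq_bot_iff.mpr ?_
      rintro _ ⟨⟨b, rfl⟩, -, hb, -⟩
      obtain rfl : b = 0 := (hindep b 0 0 (by simpa using hb)).1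
      simp
    rw [hsplit, sup_inf_assoc_of_le _ ((closure_le _).mpr ?_), hdisj, sup_bot_eq]
    simp [Set.insert_subset_iff, KOne, mem_prod]
  have hK₁ : KOne ≤ (Λ ⊓ KOne).topologicalClosure :=
    KOne_le_of_isClosed (isClosed_topologicalClosure _) hα hγ
      (le_topologicalClosure _ ⟨h₁Λ, trivial, rfl, trivial⟩)
      (le_topologicalClosure _ ⟨h₃Λ, trivial, rfl, trivial⟩)
  have hK₂ : KTwo ≤ (Λ ⊓ KTwo).topologicalClosure :=
    KTwo_le_of_isClosed (isClosed_topologicalClosure _) hα hγ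
      (le_topologicalClosure _ ⟨h₂Λ, rfl, trivial, trivial⟩)
      (le_topologicalClosure _ ⟨h₃Λ, rfl, trivial, trivial⟩)
  have hΛ_top : Λ.topologicalClosure = ⊤ :=
    eq_top_of_KOne_le_of_KTwo_le (hK₁.trans (topologicalClosure_mono inf_le_left))
      (hK₂.trans (topologicalClosure_mono inf_le_left))
  refine ⟨dense_iff_closure_eq.mpr ?_, hΛK₁, ?_, ?_⟩
  · rw [← topologicalClosure_coe, hΛ_top, coe_top]
  · exact topologicalClosure_coe (s := Λ ⊓ KOne) ▸ hK₁
  · exact topologicalClosure_coe (s := Λ ⊓ KTwo) ▸ hK₂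
end

section
/- Let G = H ≀_I Γ be a generalized wreath product of countable groups and let Λ ≤ G be a subgroup. Suppose there exists a square-summable function ξ : H × I → ℂ such that for every (h, γ) ∈ Λ and every (k, i) ∈ H × I one has ξ(k, i) = ξ(h_i⁻¹k, γ⁻¹·i) − 1_{[h_i⁻¹k = e]} + 1_{[k = e]}. Then either there exist i ∈ I and a finite-index subgroup Λ₀ ≤ Λ with Λ₀ ⊆ H ≀_I Stab i, or there exists b ∈ H^(I) such that b⁻¹Λb ⊆ Γ. -/
/-! If some `Λ`-orbit in `I` is finite, its stabilizer in `Λ` is the required finite-index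
subgroup. Otherwise every `Λ`-orbit in `I` is infinite. The cocycle identity says that
`μ(k, i) := 1_{[k = e]} - ξ(k, i)` is invariant under the action `(h, γ) • (k, i) = (h_{γi} k, γi)`
of `G` on `H × I`. Since `ξ ∈ ℓ²` has finite nonzero level sets and `μ` is constant on the
(infinite) `Λ`-orbits, `μ` is the indicator of a `Λ`-invariant set `A` which differs from
`{e} × I` in finitely many points. The set of `i` whose fibre `A_i` is not a singleton is then
finite and `Λ`-invariant, hence empty, so `A` is the graph of some `b ∈ H^(I)`. Invariance of
this graph under `g = (h, γ)` says `h · (γ • b) = b`, that is `b⁻¹ g b = γ`.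
-/

/-- The subgroup `H^(I)` of finitely supported elements of `I → H`. -/
def FinSuppSubgroup (H I : Type*) [Group H] : Subgroup (I → H) where
  carrier := {h | {i | h i ≠ 1}.Finite}
  one_mem' := by simp
  mul_mem' := by
    intro a b ha hb
    apply (ha.union hb).subset
    intro i hi
    by_contra hc
    simp only [Set.mem_union, Set.mem_setOf_eq, not_or, not_not] at hc
    exact hi (by simp [Pi.mul_apply, hc.1, hc.2])
  inv_mem' := by
    intro a ha
    apply ha.subset
    intro i hi
    simp only [Set.mem_setOf_eq, Pi.inv_apply, ne_eq, inv_eq_one] at hi ⊢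
    exact hi

/-- The Bernoulli shift automorphism of `H^(I)` associated with `γ ∈ Γ`. -/
def shiftEquiv (H I Γ : Type*) [Group H] [Group Γ] [MulAction Γ I] (γ : Γ) :
    FinSuppSubgroup H I ≃* FinSuppSubgroup H I where
  toFun x := ⟨fun i => (x : I → H) (γ⁻¹ • i), by
    have hx : {i | (x : I → H) i ≠ 1}.Finite := x.2
    show {i | (x : I → H) (γ⁻¹ • i) ≠ 1}.Finite
    apply (hx.image (fun i => γ • i)).subset
    intro i hi
    exact ⟨γ⁻¹ • i, hi, smul_inv_smul γ i⟩⟩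
  invFun x := ⟨fun i => (x : I → H) (γ • i), by
    have hx : {i | (x : I → H) i ≠ 1}.Finite := x.2
    show {i | (x : I → H) (γ • i) ≠ 1}.Finite
    apply (hx.image (fun i => γ⁻¹ • i)).subset
    intro i hi
    exact ⟨γ • i, hi, inv_smul_smul γ i⟩⟩
  left_inv x := Subtype.ext (funext fun i => by simp)
  right_inv x := Subtype.ext (funext fun i => by simp)
  map_mul' x y := rfl

/-- The action of `Γ` on `H^(I)` by shifting indices, as a homomorphism into the
automorphism group. -/
def shiftHom (H I Γ : Type*) [Group H] [Group Γ] [MulAction Γ I] :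
    Γ →* MulAut (FinSuppSubgroup H I) where
  toFun γ := shiftEquiv H I Γ γ
  map_one' := by
    apply MulEquiv.ext
    intro x
    exact Subtype.ext (funext fun i => by simp [shiftEquiv])
  map_mul' γ₁ γ₂ := by
    apply MulEquiv.ext
    intro x
    exact Subtype.ext (funext fun i => by simp [shiftEquiv, mul_smul])

/-- The generalized wreath product `G = H ≀_I Γ = H^(I) ⋊ Γ`. -/
abbrev WreathProduct (H I Γ : Type*) [Group H] [Group Γ] [MulAction Γ I] :=
  FinSuppSubgroup H I ⋊[shiftHom H I Γ] Γ

theorem Memℓp.finite_setOf_eq {α E : Type*} [NormedAddCommGroup E] {p : ENNReal} {f : α → E}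
    (hf : Memℓp f p) (hp : 0 < p.toReal) {v : E} (hv : v ≠ 0) : {x | f x = v}.Finite := by
  have hpos : 0 < ‖v‖ ^ p.toReal := Real.rpow_pos_of_pos (norm_pos_iff.mpr hv) _
  have hsmall := (hf.summable hp).tendsto_cofinite_zero.eventually_lt_const hpos
  refine (Filter.eventually_cofinite.mp hsmall).subset ?_
  rintro x (hx : f x = v)
  simp [hx]

theorem Set.Infinite.zero_mem_of_mapsTo {α E : Type*} [Zero E] {f : α → E}
    (hf : ∀ v ≠ 0, {x | f x = v}.Finite) {S : Set α} (hS : S.Infinite) {T : Set E}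
    (hT : T.Finite) (hST : S.MapsTo f T) : (0 : E) ∈ T := by
  by_contra h0
  refine hS ((hT.biUnion fun v hv => hf v (ne_of_mem_of_not_mem hv h0)).subset ?_)
  intro x hx
  exact Set.mem_biUnion (hST hx) rfl

theorem exists_le_index_ne_zero_fixing_of_finite_orbit {G α : Type*} [Group G] [MulAction G α]
    {Λ : Subgroup G} {a : α} (ha : (MulAction.orbit Λ a).Finite) :
    ∃ Λ₀ : Subgroup G, Λ₀ ≤ Λ ∧ (Λ₀.subgroupOf Λ).index ≠ 0 ∧ ∀ g ∈ Λ₀, g • a = a := by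
  refine ⟨(MulAction.stabilizer Λ a).map Λ.subtype, Subgroup.map_subtype_le _, ?_, ?_⟩
  · rw [← Subgroup.comap_subtype, Subgroup.comap_map_eq_self_of_injective Λ.subtype_injective,
      MulAction.index_stabilizer]
    exact ((Set.ncard_pos ha).2 ⟨a, MulAction.mem_orbit_self a⟩).ne'
  · rintro _ ⟨g, hg, rfl⟩
    exact hg

theorem eq_zero_or_eq_one_of_smul_invariant {K X R : Type*} [Group K] [MulAction K X]
    [AddCommGroupWithOne R] {δ ξ : X → R} (hδ : ∀ x, δ x = 0 ∨ δ x = 1)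
    (hξ : ∀ v ≠ 0, {x | ξ x = v}.Finite) (hinv : ∀ (g : K) x, δ (g • x) - ξ (g • x) = δ x - ξ x) {x : X}
    (hx : (MulAction.orbit K x).Infinite) : δ x - ξ x = 0 ∨ δ x - ξ x = 1 := by
  have hmaps : (MulAction.orbit K x).MapsTo ξ {1 - (δ x - ξ x), -(δ x - ξ x)} := by
    rintro _ ⟨g, rfl⟩
    have hg : ξ (g • x) = δ (g • x) - (δ x - ξ x) := by rw [← hinv g]; abel
    rcases hδ (g • x) with h | h <;> simp [hg, h]
  have h0 := hx.zero_mem_of_mapsTo hξ (Set.toFinite _) hmaps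
  rcases h0 with h | h
  · exact Or.inr (sub_eq_zero.mp h.symm).symm
  · exact Or.inl (neg_eq_zero.mp h.symm)

theorem symmDiff_subset_of_eq_zero_or_eq_one {X R : Type*} [AddGroupWithOne R] {P : X → Prop}
    [DecidablePred P] {ξ : X → R}
    (h01 : ∀ x, (if P x then 1 else 0) - ξ x = 0 ∨ (if P x then 1 else 0) - ξ x = 1) :
    symmDiff {x | (if P x then 1 else 0) - ξ x = 1} {x | P x} ⊆ {x | ξ x = -1} ∪ {x | ξ x = 1} := by
  rintro x (⟨h1, hx⟩ | ⟨hx, h1⟩)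
  · replace h1 : 0 - ξ x = 1 := by
      simpa only [Set.mem_ofPred_eq, if_neg (show ¬P x from hx)] using h1
    exact Or.inl (show ξ x = -1 by rw [← h1, zero_sub, neg_neg])
  · have h0 : 1 - ξ x = 0 := by
      simpa only [if_pos (show P x from hx)] using (h01 x).resolve_right h1
    exact Or.inr (show ξ x = 1 from (sub_eq_zero.mp h0).symm)

namespace WreathProduct

variable {H I Γ : Type*} [Group H] [Group Γ] [MulAction Γ I]

instance : MulAction (WreathProduct H I Γ) I := MulAction.compHom I SemidirectProduct.rightHom

instance : MulAction (WreathProduct H I Γ) (H × I) where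
  smul g x := ((g.left : I → H) (g.right • x.2) * x.1, g.right • x.2)
  one_smul x := Prod.ext (one_mul x.1) (one_smul Γ x.2)
  mul_smul g g' x := Prod.ext (by
    show ((g * g').left : I → H) ((g.right * g'.right) • x.2) * x.1 =
      (g.left : I → H) (g.right • g'.right • x.2) * ((g'.left : I → H) (g'.right • x.2) * x.1)
    simp [mul_smul, mul_assoc, shiftHom, shiftEquiv]) (mul_smul g.right g'.right x.2)

theorem smul_mk (g : WreathProduct H I Γ) (k : H) (i : I) :
    g • (k, i) = ((g.left : I → H) (g.right • i) * k, g.right • i) := rfl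

theorem indicator_sub_smul_eq_of_cocycle {R : Type*} [AddCommGroupWithOne R] [DecidableEq H]
    {ξ : H × I → R} {g : WreathProduct H I Γ}
    (hg : ∀ k : H, ∀ i : I,
      ξ (k, i) = ξ (((g.left : I → H) i)⁻¹ * k, g.right⁻¹ • i)
        - (if ((g.left : I → H) i)⁻¹ * k = 1 then (1 : R) else 0)
        + (if k = 1 then (1 : R) else 0)) (x : H × I) :
    (if (g • x).1 = 1 then (1 : R) else 0) - ξ (g • x) = (if x.1 = 1 then 1 else 0) - ξ x := by
  obtain ⟨k, i⟩ := x
  have h := hg ((g.left : I → H) (g.right • i) * k) (g.right • i)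
  rw [inv_mul_cancel_left, inv_smul_smul] at h
  rw [smul_mk, h]
  abel

theorem infinite_orbit_of_infinite_orbit_snd {Λ : Subgroup (WreathProduct H I Γ)} {x : H × I}
    (hx : (MulAction.orbit Λ x.2).Infinite) : (MulAction.orbit Λ x).Infinite :=
  Set.Infinite.of_image Prod.snd (by rwa [MulAction.orbit, ← Set.range_comp])

theorem existsUnique_mem_smul_iff {A : Set (H × I)} {g : WreathProduct H I Γ}
    (hA : ∀ x, g • x ∈ A ↔ x ∈ A) (i : I) :
    (∃! k, (k, g • i) ∈ A) ↔ ∃! k, (k, i) ∈ A :=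
  ((Equiv.mulLeft ((g.left : I → H) (g.right • i))).existsUnique_congr fun k => by
    rw [← hA, smul_mk]; rfl).symm

theorem exists_forall_mem_iff_eq_of_finite_symmDiff {Λ : Subgroup (WreathProduct H I Γ)}
    {A : Set (H × I)} (hA : ∀ g ∈ Λ, ∀ x, g • x ∈ A ↔ x ∈ A)
    (hfin : (symmDiff A {x | x.1 = 1}).Finite) (horb : ∀ i : I, (MulAction.orbit Λ i).Infinite) :
    ∃ b : FinSuppSubgroup H I, ∀ k i, (k, i) ∈ A ↔ k = (b : I → H) i := by
  have hbad : {i : I | ¬ ∃! k, (k, i) ∈ A}.Finite := by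
    refine (hfin.image Prod.snd).subset fun i hi => ?_
    by_cases h1 : ((1 : H), i) ∈ A
    · obtain ⟨k, hk, hk1⟩ : ∃ k, (k, i) ∈ A ∧ k ≠ 1 := by
        by_contra! h
        exact hi ⟨1, h1, h⟩
      exact ⟨(k, i), Or.inl ⟨hk, hk1⟩, rfl⟩
    · exact ⟨(1, i), Or.inr ⟨rfl, h1⟩, rfl⟩
  have hunique : ∀ i, ∃! k, (k, i) ∈ A := by
    intro i
    by_contra hi
    refine horb i (hbad.subset ?_)
    rintro _ ⟨g, rfl⟩
    exact fun h => hi ((existsUnique_mem_smul_iff (hA g g.2) i).mp h)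
  choose b hb hb_unique using hunique
  refine ⟨⟨b, (hfin.image Prod.snd).subset fun i hi => ⟨(b i, i), Or.inl ⟨hb i, hi⟩, rfl⟩⟩,
    fun k i => ⟨hb_unique i k, ?_⟩⟩
  rintro rfl
  exact hb i

theorem inv_inl_mul_mul_inl_mem_range_inr {g : WreathProduct H I Γ} {b : FinSuppSubgroup H I}
    {A : Set (H × I)} (hA : ∀ x, g • x ∈ A ↔ x ∈ A) (hb : ∀ k i, (k, i) ∈ A ↔ k = (b : I → H) i) :
    (SemidirectProduct.inl b)⁻¹ * g * SemidirectProduct.inl b ∈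
      (SemidirectProduct.inr : Γ →* WreathProduct H I Γ).range := by
  have hfix : g.left * shiftHom H I Γ g.right b = b := by
    ext i
    have h := (hA ((b : I → H) (g.right⁻¹ • i), g.right⁻¹ • i)).mpr ((hb _ _).mpr rfl)
    rwa [smul_mk, smul_inv_smul, hb] at h
  refine ⟨g.right, SemidirectProduct.ext ?_ ?_⟩
  · simp [mul_assoc, hfix]
  · simp

end WreathProduct

theorem wreath_relative_T_dichotomy_general
    {H Γ I : Type*} [Group H] [Group Γ] [MulAction Γ I] [DecidableEq H]
    (Λ : Subgroup (WreathProduct H I Γ))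
    (ξ : H × I → ℂ) (hξ : Memℓp ξ 2)
    (hcocycle : ∀ g ∈ Λ, ∀ k : H, ∀ i : I,
      ξ (k, i) = ξ (((g.left : I → H) i)⁻¹ * k, g.right⁻¹ • i)
        - (if ((g.left : I → H) i)⁻¹ * k = 1 then (1 : ℂ) else 0)
        + (if k = 1 then (1 : ℂ) else 0)) :
    (∃ (i : I) (Λ₀ : Subgroup (WreathProduct H I Γ)), Λ₀ ≤ Λ ∧
      (Λ₀.subgroupOf Λ).index ≠ 0 ∧ ∀ g ∈ Λ₀, g.right • i = i) ∨
    (∃ b : FinSuppSubgroup H I, ∀ g ∈ Λ,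
      (SemidirectProduct.inl b)⁻¹ * g * SemidirectProduct.inl b ∈
        (SemidirectProduct.inr : Γ →* WreathProduct H I Γ).range) := by
  by_cases hfin : ∃ i : I, (MulAction.orbit Λ i).Finite
  · obtain ⟨i, hi⟩ := hfin
    exact Or.inl ⟨i, exists_le_index_ne_zero_fixing_of_finite_orbit hi⟩
  replace hfin : ∀ i : I, (MulAction.orbit Λ i).Infinite := fun i hi => hfin ⟨i, hi⟩
  right
  set δ : H × I → ℂ := fun x => if x.1 = 1 then 1 else 0
  have hinv : ∀ g ∈ Λ, ∀ x, δ (g • x) - ξ (g • x) = δ x - ξ x := fun g hg =>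
    WreathProduct.indicator_sub_smul_eq_of_cocycle (hcocycle g hg)
  have hlevel : ∀ v ≠ 0, {x | ξ x = v}.Finite := fun v hv => hξ.finite_setOf_eq (by norm_num) hv
  have h01 : ∀ x, δ x - ξ x = 0 ∨ δ x - ξ x = 1 := fun x =>
    eq_zero_or_eq_one_of_smul_invariant (K := Λ) (δ := δ) (fun x => (ite_eq_or_eq _ _ _).symm)
      hlevel (fun g => hinv g g.2) (WreathProduct.infinite_orbit_of_infinite_orbit_snd (hfin x.2))
  have hsymm : (symmDiff {x | δ x - ξ x = 1} {x | x.1 = 1}).Finite :=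
    ((hlevel (-1) (by norm_num)).union (hlevel 1 one_ne_zero)).subset
      (symmDiff_subset_of_eq_zero_or_eq_one h01)
  obtain ⟨b, hb⟩ := WreathProduct.exists_forall_mem_iff_eq_of_finite_symmDiff
    (fun g hg x => iff_of_eq (congrArg (· = 1) (hinv g hg x))) hsymm hfin
  exact ⟨b, fun g hg => WreathProduct.inv_inl_mul_mul_inl_mem_range_inr
    (fun x => iff_of_eq (congrArg (· = 1) (hinv g hg x))) hb⟩

/-- Let `G = H ≀_I Γ` be a generalized wreath product of countable groups
and `Λ ≤ G` a subgroup.  Suppose there is a square-summable `ξ : H × I → ℂ` such that for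
every `(h, γ) ∈ Λ` and every `(k, i)` one has
`ξ(k, i) = ξ(h_i⁻¹k, γ⁻¹·i) − 1_{[h_i⁻¹k = e]} + 1_{[k = e]}`.  Then either a finite-index
subgroup of `Λ` is contained in `H ≀_I Stab i` for some `i ∈ I`, or some `b ∈ H^(I)`
satisfies `b⁻¹Λb ⊆ Γ`. -/
theorem wreath_relative_T_dichotomy
    {H Γ I : Type*} [Group H] [Countable H] [Group Γ] [Countable Γ]
    [Countable I] [MulAction Γ I] [DecidableEq H]
    (Λ : Subgroup (WreathProduct H I Γ))
    (ξ : H × I → ℂ) (hξ : Memℓp ξ 2)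
    (hcocycle : ∀ g ∈ Λ, ∀ k : H, ∀ i : I,
      ξ (k, i) = ξ (((g.left : I → H) i)⁻¹ * k, g.right⁻¹ • i)
        - (if ((g.left : I → H) i)⁻¹ * k = 1 then (1 : ℂ) else 0)
        + (if k = 1 then (1 : ℂ) else 0)) :
    (∃ (i : I) (Λ₀ : Subgroup (WreathProduct H I Γ)), Λ₀ ≤ Λ ∧
      (Λ₀.subgroupOf Λ).index ≠ 0 ∧ ∀ g ∈ Λ₀, g.right • i = i) ∨
    (∃ b : FinSuppSubgroup H I, ∀ g ∈ Λ,
      (SemidirectProduct.inl b)⁻¹ * g * SemidirectProduct.inl b ∈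
        (SemidirectProduct.inr : Γ →* WreathProduct H I Γ).range) :=
  wreath_relative_T_dichotomy_general Λ ξ hξ hcocycle
end

section
/- Let G be a countable group and Λ₁, Λ₂ ≤ G subgroups such that Λ₁ ∩ Λ₂ has infinite index in Λ₁. Then there exists a sequence (λ_n) of elements of Λ₁ such that for every finite subset F ⊆ G one has λ_n ∉ FΛ₂ for all sufficiently large n, where FΛ₂ = {fλ : f ∈ F, λ ∈ Λ₂}. -/
/-!
Distinct cosets of `Λ₁ ∩ Λ₂` in `Λ₁` lie in distinct left cosets of `Λ₂` in `G`, so infinite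
index yields elements `λ_n ∈ Λ₁` whose cosets `λ_n Λ₂` are pairwise distinct. A finite set `F`
meets only finitely many cosets of `Λ₂`, and `λ_n ∈ FΛ₂` says exactly that `λ_n Λ₂` is one of
them; this can happen for only finitely many `n`.
-/

open Filter

namespace QuotientGroup

variable {G : Type*} [Group G]

theorem mk_mem_image_mk_iff {K : Subgroup G} {F : Set G} {x : G} :
    (x : G ⧸ K) ∈ ((↑) : G → G ⧸ K) '' F ↔ ∃ f ∈ F, ∃ m ∈ K, x = f * m := by
  constructor
  · rintro ⟨f, hf, hfx⟩
    exact ⟨f, hf, f⁻¹ * x, QuotientGroup.eq.1 hfx, by group⟩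
  · rintro ⟨f, hf, m, hm, rfl⟩
    exact ⟨f, hf, QuotientGroup.eq.2 (by simpa using hm)⟩

theorem mk_inf_subgroupOf_eq_iff {H K : Subgroup G} {a b : H} :
    (a : H ⧸ (H ⊓ K).subgroupOf H) = b ↔ ((a : G) : G ⧸ K) = (b : G) := by
  rw [Subgroup.inf_subgroupOf_left, QuotientGroup.eq, QuotientGroup.eq, Subgroup.mem_subgroupOf]
  push_cast
  rfl

theorem exists_seq_mem_injective_mk {H K : Subgroup G}
    (hinf : Infinite (H ⧸ (H ⊓ K).subgroupOf H)) :
    ∃ lam : ℕ → G, (∀ n, lam n ∈ H) ∧ Function.Injective fun n ↦ (lam n : G ⧸ K) := by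
  let e := Infinite.natEmbedding (H ⧸ (H ⊓ K).subgroupOf H)
  refine ⟨fun n ↦ (e n).out, fun n ↦ (e n).out.2, fun m n hmn ↦ e.injective ?_⟩
  rw [← (e m).out_eq, ← (e n).out_eq]
  exact mk_inf_subgroupOf_eq_iff.2 hmn

end QuotientGroup

theorem exists_seq_escaping_finitely_many_cosets_general
    {G : Type*} [Group G] (Λ₁ Λ₂ : Subgroup G)
    (hinf : Infinite (Λ₁ ⧸ (Λ₁ ⊓ Λ₂).subgroupOf Λ₁)) :
    ∃ lam : ℕ → G, (∀ n, lam n ∈ Λ₁) ∧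
      ∀ F : Set G, F.Finite → ∃ N : ℕ, ∀ n ≥ N, ¬ ∃ f ∈ F, ∃ m ∈ Λ₂, lam n = f * m := by
  obtain ⟨lam, hmem, hinj⟩ := QuotientGroup.exists_seq_mem_injective_mk hinf
  refine ⟨lam, hmem, fun F hF ↦ ?_⟩
  have hcosets : (((↑) : G → G ⧸ Λ₂) '' F).Finite := hF.image _
  have hescape := hinj.tendsto_cofinite.eventually hcosets.eventually_cofinite_notMem
  rw [Nat.cofinite_eq_atTop, eventually_atTop] at hescape
  simpa only [QuotientGroup.mk_mem_image_mk_iff] using hescape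

/-- Let `G` be a countable group and `Λ₁, Λ₂ ≤ G` subgroups such that
`Λ₁ ∩ Λ₂` has infinite index in `Λ₁`.  Then there exists a sequence `(λ_n)` in `Λ₁` such
that for every finite subset `F ⊆ G` one has `λ_n ∉ FΛ₂` for all sufficiently large `n`. -/
theorem exists_seq_escaping_finitely_many_cosets
    {G : Type*} [Group G] [Countable G] (Λ₁ Λ₂ : Subgroup G)
    (hinf : Infinite (Λ₁ ⧸ (Λ₁ ⊓ Λ₂).subgroupOf Λ₁)) :
    ∃ lam : ℕ → G, (∀ n, lam n ∈ Λ₁) ∧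
      ∀ F : Set G, F.Finite → ∃ N : ℕ, ∀ n ≥ N, ¬ ∃ f ∈ F, ∃ m ∈ Λ₂, lam n = f * m :=
  exists_seq_escaping_finitely_many_cosets_general Λ₁ Λ₂ hinf
end

section
/- Let S, T ⊆ ℕ^{<ℕ} be trees all of whose elements are sequences consisting only of even numbers, and let ψ : S → T be a tree isomorphism, i.e. a bijection satisfying |ψ(σ)| = |σ| for all σ ∈ S and ψ(σ⁻) = ψ(σ)⁻ for all σ ∈ S with |σ| ≥ 1. Then ψ extends to a bijection ψ̃ : ℕ^{<ℕ} → ℕ^{<ℕ} with ψ̃|_S = ψ, |ψ̃(σ)| = |σ| for all σ, and ψ̃(σ⁻) = ψ̃(σ)⁻ for all σ with |σ| ≥ 1. -/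
open Function Set

theorem Set.InjOn.exists_perm_eqOn {α : Type*} [Countable α] {f : α → α} {A : Set α}
    (hf : InjOn f A) (hA : Aᶜ.Infinite) (hfA : (f '' A)ᶜ.Infinite) :
    ∃ e : Equiv.Perm α, EqOn e f A := by
  have := hA.to_subtype
  have := hfA.to_subtype
  obtain ⟨eCompl⟩ : Nonempty (↥Aᶜ ≃ ↥(f '' A)ᶜ) := nonempty_equiv_of_countable
  classical
  refine ⟨(Equiv.Set.sumCompl A).symm.trans
    ((Equiv.Set.imageOfInjOn f A hf).sumCongr eCompl |>.trans (Equiv.Set.sumCompl _)),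
    fun a ha => ?_⟩
  simp [Equiv.Set.sumCompl_symm_apply_of_mem ha, Equiv.Set.imageOfInjOn]

theorem Nat.infinite_compl_of_forall_even {A : Set ℕ} (hA : ∀ n ∈ A, Even n) : Aᶜ.Infinite :=
  Set.infinite_of_injective_forall_mem (f := fun k => 2 * k + 1)
    (fun _ _ h => by simpa using h) fun k hk => by simpa using hA _ hk

section TreeMapOfPerms

variable {α : Type*} (E : List α → Equiv.Perm α)

/-- The automorphism of the full tree `α^{<ω}` that permutes the children of each node `σ`
by `E σ`. -/
def treeMapOfPerms (σ : List α) : List α :=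
  σ.reverseRecOn [] fun τ a ψτ => ψτ ++ [E τ a]

@[simp]
theorem treeMapOfPerms_nil : treeMapOfPerms E [] = [] := by
  simp [treeMapOfPerms]

@[simp]
theorem treeMapOfPerms_concat (σ : List α) (a : α) :
    treeMapOfPerms E (σ ++ [a]) = treeMapOfPerms E σ ++ [E σ a] := by
  simp [treeMapOfPerms]

@[simp]
theorem length_treeMapOfPerms (σ : List α) : (treeMapOfPerms E σ).length = σ.length := by
  induction σ using List.reverseRecOn <;> simp [*]

theorem treeMapOfPerms_dropLast (σ : List α) :
    treeMapOfPerms E σ.dropLast = (treeMapOfPerms E σ).dropLast := by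
  obtain rfl | ⟨σ, a, rfl⟩ := σ.eq_nil_or_concat <;> simp

theorem treeMapOfPerms_injective : Injective (treeMapOfPerms E) := by
  intro σ
  induction σ using List.reverseRecOn with
  | nil => intro τ h; simpa [eq_comm] using congrArg List.length h
  | append_singleton σ a ih =>
    intro τ h
    obtain rfl | ⟨τ, b, rfl⟩ := τ.eq_nil_or_concat
    · simpa using congrArg List.length h
    · rw [List.concat_eq_append, treeMapOfPerms_concat, treeMapOfPerms_concat] at h
      obtain ⟨hprefix, hlast⟩ := List.append_inj' h rfl
      obtain rfl := ih hprefix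
      simpa using hlast

theorem treeMapOfPerms_surjective : Surjective (treeMapOfPerms E) := by
  intro τ
  induction τ using List.reverseRecOn with
  | nil => exact ⟨[], treeMapOfPerms_nil E⟩
  | append_singleton τ b ih =>
    obtain ⟨σ, rfl⟩ := ih
    exact ⟨σ ++ [(E σ).symm b], by simp⟩

theorem treeMapOfPerms_bijective : Bijective (treeMapOfPerms E) :=
  ⟨treeMapOfPerms_injective E, treeMapOfPerms_surjective E⟩

theorem eqOn_treeMapOfPerms {S : Set (List α)} {ψ : List α → List α}
    (hS : ∀ σ a, σ ++ [a] ∈ S → σ ∈ S) (hnil : [] ∈ S → ψ [] = [])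
    (hψ : ∀ σ a, σ ++ [a] ∈ S → ψ (σ ++ [a]) = ψ σ ++ [E σ a]) :
    EqOn (treeMapOfPerms E) ψ S := by
  intro σ hσ
  induction σ using List.reverseRecOn with
  | nil => simp [hnil hσ]
  | append_singleton σ a ih => rw [treeMapOfPerms_concat, ih (hS σ a hσ), hψ σ a hσ]

end TreeMapOfPerms

section TreeIso

variable {S T : Set (List ℕ)} {ψ : List ℕ → List ℕ}

theorem map_concat_eq_append_getLastD (hlen : ∀ σ ∈ S, (ψ σ).length = σ.length)
    (hdrop : ∀ σ ∈ S, σ ≠ [] → ψ σ.dropLast = (ψ σ).dropLast) {σ : List ℕ} {a : ℕ}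
    (h : σ ++ [a] ∈ S) : ψ (σ ++ [a]) = ψ σ ++ [(ψ (σ ++ [a])).getLastD a] := by
  obtain h0 | ⟨τ, b, hτ⟩ := (ψ (σ ++ [a])).eq_nil_or_concat
  · simpa [h0] using hlen _ h
  · have := hdrop _ h (by simp)
    simp_all

theorem exists_perm_map_concat (hSeven : ∀ σ ∈ S, ∀ x ∈ σ, Even x)
    (hTeven : ∀ σ ∈ T, ∀ x ∈ σ, Even x) (hbij : BijOn ψ S T)
    (hlen : ∀ σ ∈ S, (ψ σ).length = σ.length)
    (hdrop : ∀ σ ∈ S, σ ≠ [] → ψ σ.dropLast = (ψ σ).dropLast) (σ : List ℕ) :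
    ∃ e : Equiv.Perm ℕ, ∀ a, σ ++ [a] ∈ S → ψ (σ ++ [a]) = ψ σ ++ [e a] := by
  set A : Set ℕ := {a | σ ++ [a] ∈ S}
  set f : ℕ → ℕ := fun a => (ψ (σ ++ [a])).getLastD a
  have hf : ∀ a ∈ A, ψ (σ ++ [a]) = ψ σ ++ [f a] := fun a ha =>
    map_concat_eq_append_getLastD hlen hdrop ha
  have hinj : InjOn f A := fun a ha b hb hab => by
    simpa using hbij.injOn ha hb (by rw [hf a ha, hf b hb, hab])
  have hAeven : ∀ a ∈ A, Even a := fun a ha => hSeven _ ha a (by simp)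
  have hfAeven : ∀ b ∈ f '' A, Even b := by
    rintro _ ⟨a, ha, rfl⟩
    exact hTeven _ (hf a ha ▸ hbij.mapsTo ha) (f a) (by simp)
  obtain ⟨e, he⟩ := hinj.exists_perm_eqOn (Nat.infinite_compl_of_forall_even hAeven)
    (Nat.infinite_compl_of_forall_even hfAeven)
  exact ⟨e, fun a ha => (hf a ha).trans (by rw [he ha])⟩

end TreeIso

theorem tree_isomorphism_extends_general
    (S T : Set (List ℕ)) (hS : IsTree S)
    (hSeven : ∀ σ ∈ S, ∀ x ∈ σ, Even x) (hTeven : ∀ σ ∈ T, ∀ x ∈ σ, Even x)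
    (ψ : List ℕ → List ℕ) (hbij : Set.BijOn ψ S T)
    (hlen : ∀ σ ∈ S, (ψ σ).length = σ.length)
    (hdrop : ∀ σ ∈ S, σ ≠ [] → ψ σ.dropLast = (ψ σ).dropLast) :
    ∃ ψ' : List ℕ → List ℕ, Function.Bijective ψ' ∧
      (∀ σ ∈ S, ψ' σ = ψ σ) ∧
      (∀ σ : List ℕ, (ψ' σ).length = σ.length) ∧
      (∀ σ : List ℕ, σ ≠ [] → ψ' σ.dropLast = (ψ' σ).dropLast) := by
  choose E hE using exists_perm_map_concat hSeven hTeven hbij hlen hdrop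
  refine ⟨treeMapOfPerms E, treeMapOfPerms_bijective E, ?_, length_treeMapOfPerms E,
    fun σ _ => treeMapOfPerms_dropLast E σ⟩
  refine eqOn_treeMapOfPerms E (fun σ a h => hS _ h σ (List.prefix_append σ [a]))
    (fun h => ?_) hE
  simpa using hlen [] h

/-- Let `S, T ⊆ ℕ^{<ℕ}` be trees all of whose elements are sequences of
even numbers, and let `ψ : S → T` be a tree isomorphism (a bijection preserving length and
compatible with removing the last entry).  Then `ψ` extends to a bijection
`ψ̃ : ℕ^{<ℕ} → ℕ^{<ℕ}` preserving length and compatible with removing the last entry. -/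
theorem tree_isomorphism_extends
    (S T : Set (List ℕ)) (hS : IsTree S) (hT : IsTree T)
    (hSeven : ∀ σ ∈ S, ∀ x ∈ σ, Even x) (hTeven : ∀ σ ∈ T, ∀ x ∈ σ, Even x)
    (ψ : List ℕ → List ℕ) (hbij : Set.BijOn ψ S T)
    (hlen : ∀ σ ∈ S, (ψ σ).length = σ.length)
    (hdrop : ∀ σ ∈ S, σ ≠ [] → ψ σ.dropLast = (ψ σ).dropLast) :
    ∃ ψ' : List ℕ → List ℕ, Function.Bijective ψ' ∧
      (∀ σ ∈ S, ψ' σ = ψ σ) ∧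
      (∀ σ : List ℕ, (ψ' σ).length = σ.length) ∧
      (∀ σ : List ℕ, σ ≠ [] → ψ' σ.dropLast = (ψ' σ).dropLast) :=
  tree_isomorphism_extends_general S T hS hSeven hTeven ψ hbij hlen hdrop
end

section
/- Let G = H ≀_I Γ be a generalized wreath product of countable groups. For each g = (h, γ) ∈ G define b(g) : H × I → ℝ by b(g)(k, i) = 1_{[k = h_i]} − 1_{[k = e]}. Then each b(g) is finitely supported (in particular square-summable), and b satisfies the 1-cocycle identity b(g g') = π(g)b(g') + b(g) for all g, g' ∈ G, where (π(g)ξ)(k, i) := ξ(h_i⁻¹k, γ⁻¹·i) for g = (h, γ). -/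
variable {H Γ I : Type*} [Group H] [Group Γ] [MulAction Γ I]

/-- The map `b(g)(k, i) = 1_{[k = h_i]} − 1_{[k = e]}` for `g = (h, γ) ∈ H ≀_I Γ`. -/
def wreathCocycle [DecidableEq H] (g : WreathProduct H I Γ) : H × I → ℝ := fun x =>
  (if x.1 = (g.left : I → H) x.2 then (1 : ℝ) else 0) - (if x.1 = 1 then (1 : ℝ) else 0)

/-- The representation `(π(g)ξ)(k, i) = ξ(h_i⁻¹k, γ⁻¹·i)` of `H ≀_I Γ` on functions
on `H × I`. -/
def wreathRep (g : WreathProduct H I Γ) (ξ : H × I → ℝ) : H × I → ℝ := fun x =>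
  ξ (((g.left : I → H) x.2)⁻¹ * x.1, g.right⁻¹ • x.2)

section translationCocycle

variable [DecidableEq H]

/-- The 1-cocycle `a ↦ δ_a - δ_1` of the left regular representation of `H`. -/
def translationCocycle (a : H) : H → ℝ := fun k =>
  (if k = a then (1 : ℝ) else 0) - (if k = 1 then (1 : ℝ) else 0)

theorem translationCocycle_one : translationCocycle (1 : H) = 0 :=
  funext fun _ => sub_self _

theorem support_translationCocycle_subset (a : H) :
    Function.support (translationCocycle a) ⊆ {a, 1} := by
  intro k hk
  by_contra hka
  simp only [Set.mem_insert_iff, Set.mem_singleton_iff, not_or] at hka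
  exact hk (by simp [translationCocycle, hka.1, hka.2])

theorem translationCocycle_mul (a b k : H) :
    translationCocycle (a * b) k = translationCocycle b (a⁻¹ * k) + translationCocycle a k := by
  simp only [translationCocycle, inv_mul_eq_iff_eq_mul, mul_one]
  abel

end translationCocycle

theorem WreathProduct.left_mul_apply (g g' : WreathProduct H I Γ) (i : I) :
    ((g * g').left : I → H) i = (g.left : I → H) i * (g'.left : I → H) (g.right⁻¹ • i) :=
  rfl

section wreathCocycle

variable [DecidableEq H]

theorem wreathCocycle_apply (g : WreathProduct H I Γ) (k : H) (i : I) :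
    wreathCocycle g (k, i) = translationCocycle ((g.left : I → H) i) k :=
  rfl

theorem support_wreathCocycle_subset (g : WreathProduct H I Γ) :
    Function.support (wreathCocycle g) ⊆
      ⋃ i ∈ {i | (g.left : I → H) i ≠ 1}, {((g.left : I → H) i, i), (1, i)} := by
  rintro ⟨k, i⟩ hki
  rw [Function.mem_support, wreathCocycle_apply] at hki
  have hi : (g.left : I → H) i ≠ 1 := fun h1 => hki (by rw [h1, translationCocycle_one]; rfl)
  refine Set.mem_biUnion hi ?_
  rcases support_translationCocycle_subset _ hki with rfl | rfl
  exacts [Or.inl rfl, Or.inr rfl]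

theorem finite_support_wreathCocycle (g : WreathProduct H I Γ) :
    (Function.support (wreathCocycle g)).Finite :=
  (Set.Finite.biUnion g.left.2 fun _ _ => Set.toFinite _).subset (support_wreathCocycle_subset g)

theorem wreathCocycle_mul (g g' : WreathProduct H I Γ) :
    wreathCocycle (g * g') = wreathRep g (wreathCocycle g') + wreathCocycle g := by
  funext ⟨k, i⟩
  simp only [wreathRep, Pi.add_apply, wreathCocycle_apply, WreathProduct.left_mul_apply]
  exact translationCocycle_mul _ _ k

end wreathCocycle

theorem wreathCocycle_finite_support_and_cocycle_general
    [DecidableEq H] :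
    (∀ g : WreathProduct H I Γ,
        (Function.support (wreathCocycle g)).Finite ∧ Memℓp (wreathCocycle g) 2) ∧
    (∀ g g' : WreathProduct H I Γ,
        wreathCocycle (g * g') = wreathRep g (wreathCocycle g') + wreathCocycle g) :=
  ⟨fun g => ⟨finite_support_wreathCocycle g,
      (memℓp_zero (finite_support_wreathCocycle g)).of_exponent_ge zero_le⟩,
    wreathCocycle_mul⟩

/-- For the generalized wreath product `G = H ≀_I Γ`, the map
`b(g)(k, i) = 1_{[k = h_i]} − 1_{[k = e]}` is finitely supported (in particular
square-summable) for every `g ∈ G`, and satisfies the 1-cocycle identity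
`b(gg') = π(g)b(g') + b(g)`. -/
theorem wreathCocycle_finite_support_and_cocycle
    [Countable H] [Countable Γ] [Countable I] [DecidableEq H] :
    (∀ g : WreathProduct H I Γ,
        (Function.support (wreathCocycle g)).Finite ∧ Memℓp (wreathCocycle g) 2) ∧
    (∀ g g' : WreathProduct H I Γ,
        wreathCocycle (g * g') = wreathRep g (wreathCocycle g') + wreathCocycle g) :=
  wreathCocycle_finite_support_and_cocycle_general
end
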